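/- arXiv:2005.05419 — 6 statements merged into one kernel-verified Lean document; each statement's English description precedes it below -/
import Mathlib

section
/- Let f: ℝⁿ → ℝ be Lipschitz and c ∈ ℝ. Then the gradient ∇f(x) = 0 for almost every x in the level set {x : f(x) = c} (with respect to Lebesgue measure). -/
/-!
At a Lebesgue density point `x` of a set `s`, the balls `closedBall (x + t • v) (ε * t)` shrink
to `x` at a rate comparable to their radius, so for small `t > 0` they still meet `s` in positive
measure. Hence every direction `v` is tangent to `s` at `x`, and almost every point of any set is
a point of unique differentiability. A function that is constant on `s` has derivative `0` within
`s`, so by uniqueness its full derivative vanishes wherever it exists; for a Lipschitz function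
that is almost everywhere, by Rademacher's theorem.
-/

open MeasureTheory Metric Filter Set Topology

section TangentCone

variable {E : Type*} [NormedAddCommGroup E] [NormedSpace ℝ E] {s : Set E} {x v : E}

theorem mem_tangentConeAt_of_frequently_closedBall_inter_nonempty
    (h : ∀ ε > 0, ∃ᶠ t in 𝓝[>] (0 : ℝ), (s ∩ closedBall (x + t • v) (ε * t)).Nonempty) :
    v ∈ tangentConeAt ℝ s x := by
  rw [nhds_basis_ball.tangentConeAt_eq_biInter_closure, mem_iInter₂]
  intro δ hδ
  refine Metric.mem_closure_iff.2 fun ε hε ↦ ?_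
  set η := min (ε / 2) 1
  have hη : 0 < η := by positivity
  have hsmall : ∀ᶠ t in 𝓝[>] (0 : ℝ), 0 < t ∧ t * (‖v‖ + 1) < δ := by
    refine eventually_mem_nhdsWithin.and (nhdsWithin_le_nhds ?_)
    exact ((continuous_mul_const (‖v‖ + 1)).tendsto' 0 0 (zero_mul _)).eventually_lt_const hδ
  obtain ⟨t, ⟨y, hys, hy⟩, ht0, htδ⟩ := ((h η hη).and_eventually hsmall).exists
  rw [mem_closedBall, dist_eq_norm] at hy
  have hyx : ‖y - x‖ < δ := calc
    ‖y - x‖ = ‖(y - (x + t • v)) + t • v‖ := by congr 1; abel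
    _ ≤ η * t + t * ‖v‖ := by
      grw [norm_add_le, hy, norm_smul, Real.norm_of_nonneg ht0.le]
    _ ≤ t * (‖v‖ + 1) := by nlinarith [min_le_right (ε / 2) 1]
    _ < δ := htδ
  refine ⟨t⁻¹ • (y - x), smul_mem_smul (mem_univ _) ⟨by simpa using hyx, by simpa using hys⟩, ?_⟩
  calc dist v (t⁻¹ • (y - x)) = t⁻¹ * ‖y - (x + t • v)‖ := by
        rw [dist_comm, dist_eq_norm, ← norm_smul_of_nonneg (inv_nonneg.2 ht0.le)]
        congr 1
        simp only [smul_sub, smul_add, smul_smul, inv_mul_cancel₀ ht0.ne', one_smul]; abel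
    _ ≤ η := by
        rw [inv_mul_le_iff₀ ht0]; linarith
    _ < ε := (min_le_left _ _).trans_lt (half_lt_self hε)

end TangentCone

section Density

variable {E : Type*} [NormedAddCommGroup E] [NormedSpace ℝ E] [FiniteDimensional ℝ E]
  [MeasurableSpace E] [BorelSpace E] (μ : Measure E) [μ.IsAddHaarMeasure]

theorem ae_eventually_closedBall_add_smul_inter_nonempty (s : Set E) :
    ∀ᵐ x ∂μ.restrict s, ∀ v : E, ∀ ε > 0,
      ∀ᶠ t in 𝓝[>] (0 : ℝ), (s ∩ closedBall (x + t • v) (ε * t)).Nonempty := by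
  -- The density theorem fixes the eccentricity bound `K` before the a.e. quantifier.
  filter_upwards [ae_all_iff.2 fun K : ℕ ↦
    IsUnifLocDoublingMeasure.ae_tendsto_measure_inter_div μ s K] with x hx v ε hε
  obtain ⟨K, hK⟩ := exists_nat_ge (‖v‖ / ε)
  have hradius : Tendsto (fun t : ℝ ↦ ε * t) (𝓝[>] 0) (𝓝[>] 0) := by
    refine tendsto_nhdsWithin_of_tendsto_nhds_of_eventually_within _ ?_ ?_
    · exact ((continuous_const_mul ε).tendsto' 0 0 (mul_zero ε)).mono_left nhdsWithin_le_nhds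
    · filter_upwards [self_mem_nhdsWithin] with t ht using mul_pos hε ht
  have hcenter : ∀ᶠ t in 𝓝[>] (0 : ℝ), x ∈ closedBall (x + t • v) (K * (ε * t)) := by
    filter_upwards [self_mem_nhdsWithin] with t ht
    rw [mem_closedBall, dist_eq_norm, sub_add_cancel_left, norm_neg, norm_smul,
      Real.norm_of_nonneg (le_of_lt ht)]
    nlinarith [(div_le_iff₀ hε).1 hK, mem_Ioi.1 ht]
  filter_upwards [(hx K _ _ hradius hcenter).eventually_ne one_ne_zero] with t ht
  exact nonempty_of_measure_ne_zero (μ := μ) fun h0 ↦ ht (by simp [h0])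

theorem ae_uniqueDiffWithinAt (s : Set E) : ∀ᵐ x ∂μ.restrict s, UniqueDiffWithinAt ℝ s x := by
  filter_upwards [ae_eventually_closedBall_add_smul_inter_nonempty μ s] with x hx
  have hcone : tangentConeAt ℝ s x = univ := eq_univ_of_forall fun v ↦
    mem_tangentConeAt_of_frequently_closedBall_inter_nonempty fun ε hε ↦ (hx v ε hε).frequently
  refine ⟨by simp only [hcone, Submodule.span_univ, Submodule.top_coe, dense_univ], ?_⟩
  exact mem_closure_of_nonempty_tangentConeAt (𝕜 := ℝ) (hcone ▸ univ_nonempty)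

end Density

theorem UniqueDiffWithinAt.hasFDerivAt_eq_zero {𝕜 E F : Type*} [NontriviallyNormedField 𝕜]
    [NormedAddCommGroup E] [NormedSpace 𝕜 E] [NormedAddCommGroup F] [NormedSpace 𝕜 F]
    {f : E → F} {f' : E →L[𝕜] F} {s : Set E} {x : E} (hs : UniqueDiffWithinAt 𝕜 s x)
    (hf : HasFDerivAt f f' x) (hfs : EqOn f (fun _ ↦ f x) s) : f' = 0 :=
  hs.eq hf.hasFDerivWithinAt ((hasFDerivWithinAt_const (f x) x s).congr hfs rfl)

/-- a Lipschitz function `f : ℝⁿ → ℝ` has vanishing gradient at almost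
every point of each level set `{x | f x = c}` (with respect to Lebesgue measure). -/
theorem gradient_zero_ae_on_level_set {n : ℕ} (f : EuclideanSpace ℝ (Fin n) → ℝ)
    (K : NNReal) (hf : LipschitzWith K f) (c : ℝ) :
    ∀ᵐ x ∂((volume : Measure (EuclideanSpace ℝ (Fin n))).restrict {x | f x = c}),
      gradient f x = 0 := by
  have hmeas : MeasurableSet {x | f x = c} :=
    (isClosed_eq hf.continuous continuous_const).measurableSet
  filter_upwards [ae_uniqueDiffWithinAt volume {x | f x = c}, ae_restrict_mem hmeas,
    ae_restrict_of_ae hf.ae_differentiableAt] with x hunique hx hdiff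
  have hderiv : fderiv ℝ f x = 0 :=
    hunique.hasFDerivAt_eq_zero hdiff.hasFDerivAt fun y hy ↦ hy.trans hx.symm
  simp [gradient, hderiv]
end

section
/- Let B be a subset of a metric space with subsets A₁, A₂ ⊂ B, let L > 0, and let f̃: A₁ ∪ A₂ → ℝ and g: B → ℝ be Lipschitz with constants at most L, such that f̃ = g on A₁ and f̃ = 0 on A₂. Then f̃ extends to a Lipschitz function f: B → ℝ with Lipschitz constant at most L satisfying g ∧ 0 ≤ f ≤ g ∨ 0 on B and ‖f‖_∞ ≤ ‖g‖_∞. -/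
/-!
Extend `ft` to a globally `L`-Lipschitz `h` (McShane), then clamp it pointwise between `g ∧ 0` and
`g ∨ 0`. Clamping between `L`-Lipschitz bounds keeps the constant `L`; on `A₁` and `A₂` the value
of `ft` (namely `g`, resp. `0`) already lies between the bounds, so it is unchanged there; and any
number between `g x ∧ 0` and `g x ∨ 0` has absolute value at most `|g x|`.
-/

open NNReal

namespace LipschitzOnWith

variable {α : Type*} [PseudoEMetricSpace α] {s : Set α} {f g : α → ℝ} {Kf Kg : ℝ≥0}

protected theorem max (hf : LipschitzOnWith Kf f s) (hg : LipschitzOnWith Kg g s) :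
    LipschitzOnWith (max Kf Kg) (fun x => max (f x) (g x)) s :=
  lipschitzOnWith_iff_restrict.2 <|
    (lipschitzOnWith_iff_restrict.1 hf).max (lipschitzOnWith_iff_restrict.1 hg)

protected theorem min (hf : LipschitzOnWith Kf f s) (hg : LipschitzOnWith Kg g s) :
    LipschitzOnWith (max Kf Kg) (fun x => min (f x) (g x)) s :=
  lipschitzOnWith_iff_restrict.2 <|
    (lipschitzOnWith_iff_restrict.1 hf).min (lipschitzOnWith_iff_restrict.1 hg)

end LipschitzOnWith

theorem max_min_of_le_of_le {a l u : ℝ} (hl : l ≤ a) (hu : a ≤ u) : max (min a u) l = a := by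
  rw [min_eq_left hu, max_eq_left hl]

theorem abs_le_abs_of_min_zero_le_of_le_max_zero {a b : ℝ} (hmin : min a 0 ≤ b)
    (hmax : b ≤ max a 0) : |b| ≤ |a| := by
  rcases le_total a 0 with ha | ha
  · rw [min_eq_left ha] at hmin
    rw [max_eq_right ha] at hmax
    rw [abs_of_nonpos hmax, abs_of_nonpos ha]
    linarith
  · rw [min_eq_right ha] at hmin
    rw [max_eq_left ha] at hmax
    rw [abs_of_nonneg hmin, abs_of_nonneg ha]
    exact hmax

theorem mcshane_variant_general {X : Type*} [PseudoMetricSpace X] (B A₁ A₂ : Set X)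
    (L : NNReal) (ft g : X → ℝ)
    (hft : LipschitzOnWith L ft (A₁ ∪ A₂)) (hg : LipschitzOnWith L g B)
    (hfg : ∀ x ∈ A₁, ft x = g x) (hf0 : ∀ x ∈ A₂, ft x = 0) :
    ∃ f : X → ℝ, LipschitzOnWith L f B ∧ (∀ x ∈ A₁ ∪ A₂, f x = ft x) ∧
      (∀ x ∈ B, min (g x) 0 ≤ f x ∧ f x ≤ max (g x) 0) ∧
      (∀ M : ℝ, (∀ x ∈ B, |g x| ≤ M) → ∀ x ∈ B, |f x| ≤ M) := by
  obtain ⟨h, hhL, hh⟩ := hft.extend_real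
  set f : X → ℝ := fun x => max (min (h x) (max (g x) 0)) (min (g x) 0)
  have hzero : LipschitzOnWith L (fun _ => (0 : ℝ)) B := (LipschitzWith.const' 0).lipschitzOnWith
  have hfL : LipschitzOnWith L f B := by
    simpa only [max_self] using
      (hhL.lipschitzOnWith.min (hg.max hzero)).max (hg.min hzero)
  have hbounds : ∀ x, min (g x) 0 ≤ f x ∧ f x ≤ max (g x) 0 := fun x =>
    ⟨le_max_right _ _, max_le (min_le_right _ _) min_le_max⟩
  refine ⟨f, hfL, fun x hx => ?_, fun x _ => hbounds x, fun M hM x hx => ?_⟩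
  · dsimp only [f]
    rw [← hh hx]
    rcases hx with hx | hx
    · rw [hfg x hx]
      exact max_min_of_le_of_le (min_le_left _ _) (le_max_left _ _)
    · rw [hf0 x hx]
      exact max_min_of_le_of_le (min_le_right _ _) (le_max_right _ _)
  · exact (abs_le_abs_of_min_zero_le_of_le_max_zero (hbounds x).1 (hbounds x).2).trans (hM x hx)

/-- McShane variant: given `A₁, A₂ ⊆ B` in a metric space, `L > 0`, and
Lipschitz maps `ft` (on `A₁ ∪ A₂`) and `g` (on `B`) with constants at most `L` such that
`ft = g` on `A₁` and `ft = 0` on `A₂`, there is a Lipschitz extension `f` of `ft` to `B`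
with constant at most `L` satisfying `g ∧ 0 ≤ f ≤ g ∨ 0` on `B` and `‖f‖_∞ ≤ ‖g‖_∞`. -/
theorem mcshane_variant {X : Type*} [PseudoMetricSpace X] (B A₁ A₂ : Set X)
    (h₁ : A₁ ⊆ B) (h₂ : A₂ ⊆ B) (L : NNReal) (hL : 0 < L) (ft g : X → ℝ)
    (hft : LipschitzOnWith L ft (A₁ ∪ A₂)) (hg : LipschitzOnWith L g B)
    (hfg : ∀ x ∈ A₁, ft x = g x) (hf0 : ∀ x ∈ A₂, ft x = 0) :
    ∃ f : X → ℝ, LipschitzOnWith L f B ∧ (∀ x ∈ A₁ ∪ A₂, f x = ft x) ∧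
      (∀ x ∈ B, min (g x) 0 ≤ f x ∧ f x ≤ max (g x) 0) ∧
      (∀ M : ℝ, (∀ x ∈ B, |g x| ≤ M) → ∀ x ∈ B, |f x| ≤ M) :=
  mcshane_variant_general B A₁ A₂ L ft g hft hg hfg hf0
end

section
/- Let V: Lip(S^{n-1}) → ℝ be a τ-continuous valuation. Then V is bounded on norm-bounded sets: for every M > 0, sup{|V(f)| : ‖f‖ ≤ M} < ∞. -/
open MeasureTheory Metric Set Filter Topology Classical
open scoped ENNReal NNReal

noncomputable section

/-- Euclidean space `ℝⁿ`. -/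
abbrev Eucl (n : ℕ) := EuclideanSpace ℝ (Fin n)

/-- The unit sphere `S^{n-1} ⊆ ℝⁿ`. -/
abbrev Sph (n : ℕ) : Set (Eucl n) := Metric.sphere (0 : Eucl n) 1

/-- The `(n-1)`-dimensional Hausdorff measure on the sphere, normalized to total mass 1. -/
noncomputable def sphMeasure (n : ℕ) : Measure (Sph n) :=
  ((μH[(n : ℝ) - 1] : Measure (Sph n)) Set.univ)⁻¹ • (μH[(n : ℝ) - 1] : Measure (Sph n))

/-- The `0`-homogeneous extension of a function on the sphere. -/
noncomputable def homExt {n : ℕ} (f : Sph n → ℝ) (y : Eucl n) : ℝ :=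
  if h : y = (0 : Eucl n) then 0 else
    f ⟨‖y‖⁻¹ • y, by
      simp [mem_sphere_zero_iff_norm, norm_smul, norm_inv,
        inv_mul_cancel₀ (norm_ne_zero_iff.mpr h)]⟩

/-- The spherical gradient of `f : S^{n-1} → ℝ`, realized as the (Euclidean) gradient of
its `0`-homogeneous extension, which is tangential at points of the sphere. -/
noncomputable def sphGrad {n : ℕ} (f : Sph n → ℝ) (y : Eucl n) : Eucl n :=
  gradient (homExt f) y

/-- `f` belongs to `Lip(S^{n-1})`. -/
def IsLip {n : ℕ} (f : Sph n → ℝ) : Prop := ∃ L : ℝ≥0, LipschitzWith L f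

/-- `‖f‖ = max (‖f‖_∞, L(f)) ≤ M`. -/
def NormBound {n : ℕ} (M : ℝ) (f : Sph n → ℝ) : Prop :=
  (∀ x, |f x| ≤ M) ∧ LipschitzWith (Real.toNNReal M) f

/-- τ-convergence of a sequence in `Lip(S^{n-1})`: uniform convergence, a uniform a.e.
bound on the gradients, and a.e. convergence of the gradients. -/
def TauTendsto {n : ℕ} (fk : ℕ → Sph n → ℝ) (f : Sph n → ℝ) : Prop :=
  TendstoUniformly fk f atTop ∧
  (∃ C : ℝ, ∀ k, ∀ᵐ (x : Sph n) ∂(sphMeasure n), ‖sphGrad (fk k) (x : Eucl n)‖ ≤ C) ∧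
  (∀ᵐ (x : Sph n) ∂(sphMeasure n),
    Tendsto (fun k => sphGrad (fk k) (x : Eucl n)) atTop (𝓝 (sphGrad f (x : Eucl n))))

/-- `V` is a valuation on `Lip(S^{n-1})`. -/
def IsValuation {n : ℕ} (V : (Sph n → ℝ) → ℝ) : Prop :=
  ∀ f g : Sph n → ℝ, IsLip f → IsLip g → V (f ⊔ g) + V (f ⊓ g) = V f + V g

/-- τ-continuity of a functional on `Lip(S^{n-1})`. -/
def TauContinuous {n : ℕ} (V : (Sph n → ℝ) → ℝ) : Prop :=
  ∀ (fk : ℕ → Sph n → ℝ) (f : Sph n → ℝ), (∀ k, IsLip (fk k)) → IsLip f →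
    TauTendsto fk f → Tendsto (fun k => V (fk k)) atTop (𝓝 (V f))

/-- The metric `d_τ(f,g) = ‖f - g‖_∞ + ∫ ‖∇f - ∇g‖ dH^{n-1}`. -/
noncomputable def dTau {n : ℕ} (f g : Sph n → ℝ) : ℝ :=
  (⨆ x : Sph n, |f x - g x|) +
    ∫ x : Sph n, ‖sphGrad f (x : Eucl n) - sphGrad g (x : Eucl n)‖ ∂(sphMeasure n)

/-- The action of an orthogonal map `φ ∈ O(n)` on the sphere. -/
noncomputable def rotAct {n : ℕ} (φ : Eucl n ≃ₗᵢ[ℝ] Eucl n) (x : Sph n) : Sph n :=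
  ⟨φ (x : Eucl n), by
    rw [mem_sphere_zero_iff_norm, φ.norm_map, ← mem_sphere_zero_iff_norm]
    exact x.2⟩

/-- Rotation invariance of a functional on `Lip(S^{n-1})`. -/
def RotInv {n : ℕ} (V : (Sph n → ℝ) → ℝ) : Prop :=
  ∀ (φ : Eucl n ≃ₗᵢ[ℝ] Eucl n) (f : Sph n → ℝ), V (f ∘ rotAct φ) = V f

/-!
Suppose `V` is unbounded on `{‖f‖ ≤ M}`. Cutting the range `[-M, M]` into `N` windows of width
`2M/N ≤ r²`, the values `V (f ⊔ tᵢ)` at the levels `tᵢ` run from `V f` to `V M`, so for `f` with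
`|V f|` huge one increment is huge, and by the valuation property so is `V` of the truncation
`h` of `f` to that window. Covering the sphere by `r`-balls and cutting `h` down by tents over
them, inclusion–exclusion gives a piece `g = h ⊓ w` with `|V g|` still huge, `g` within `2r` of a
constant and equal to the `r`-Lipschitz `w` off a `2r`-ball. With `r = 1/(j+1)` and `|V gⱼ| > j`,
a subsequence τ-converges to a constant: uniformly, with bounded gradients, and with gradients
tending to `0` off the limit centre of the balls. So `V gⱼ` converges, a contradiction.
-/

theorem norm_inv_norm_smul_sub_le {E : Type*} [NormedAddCommGroup E] [NormedSpace ℝ E]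
    {x y : E} (hx : ‖x‖ = 1) : ‖‖y‖⁻¹ • y - x‖ ≤ 2 * ‖y - x‖ := by
  rcases eq_or_ne y 0 with rfl | hy
  · simp [hx]
  have hnorm : |1 - ‖y‖| ≤ ‖y - x‖ := by
    simpa [hx, abs_sub_comm] using abs_norm_sub_norm_le y x
  have hscale : ‖‖y‖⁻¹ • y - y‖ = |1 - ‖y‖| := by
    rw [show ‖y‖⁻¹ • y - y = (‖y‖⁻¹ - 1) • y by rw [sub_smul, one_smul], norm_smul,
      Real.norm_eq_abs]
    calc |‖y‖⁻¹ - 1| * ‖y‖ = |(‖y‖⁻¹ - 1) * ‖y‖| := by rw [abs_mul, abs_norm]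
      _ = |1 - ‖y‖| := by rw [sub_one_mul, inv_mul_cancel₀ (norm_ne_zero_iff.mpr hy)]
  calc ‖‖y‖⁻¹ • y - x‖ ≤ ‖‖y‖⁻¹ • y - y‖ + ‖y - x‖ := norm_sub_le_norm_sub_add_norm_sub _ _ _
    _ ≤ 2 * ‖y - x‖ := by linarith

theorem Finset.inf_inf'_eq_inf'_inf {α ι : Type*} [SemilatticeInf α] {t : Finset ι}
    (ht : t.Nonempty) (a : α) (u : ι → α) :
    a ⊓ t.inf' ht u = t.inf' ht fun i => a ⊓ u i := by
  induction ht using Finset.Nonempty.cons_induction with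
  | singleton => simp
  | cons b t hb ht ih => rw [inf'_cons ht, inf'_cons ht, ← ih, inf_inf_distrib_left]

/-- Each step `V (x ⊔ y) = V x + V y - V (x ⊓ y)` of inclusion–exclusion triples the bound;
`x ⊓ s.sup' u` is again a supremum over `s`, of the `x ⊓ u i`. -/
theorem abs_finset_sup'_le_of_valuation {α ι : Type*} [DistribLattice α] {S : Sublattice α}
    {V : α → ℝ} (hV : ∀ f ∈ S, ∀ g ∈ S, V (f ⊔ g) + V (f ⊓ g) = V f + V g)
    {s : Finset ι} (hs : s.Nonempty) {u : ι → α} (hu : ∀ i ∈ s, u i ∈ S) {B : ℝ}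
    (hB : ∀ t ⊆ s, ∀ ht : t.Nonempty, |V (t.inf' ht u)| ≤ B) :
    |V (s.sup' hs u)| ≤ 3 ^ s.card * B := by
  induction hs using Finset.Nonempty.cons_induction generalizing u B with
  | singleton a =>
    have h := hB {a} subset_rfl (Finset.singleton_nonempty a)
    simp only [Finset.inf'_singleton, Finset.sup'_singleton, Finset.card_singleton] at h ⊢
    linarith [abs_nonneg (V (u a))]
  | cons a s ha hs ih =>
    have hsub : s ⊆ s.cons a ha := Finset.subset_cons ha
    have hua : u a ∈ S := hu a (Finset.mem_cons_self a s)
    have hBa : |V (u a)| ≤ B := by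
      simpa using hB {a} (by simp) (Finset.singleton_nonempty a)
    have hX : |V (s.sup' hs u)| ≤ 3 ^ s.card * B :=
      ih (fun i hi => hu i (hsub hi)) fun t ht => hB t (ht.trans hsub)
    have hY : |V (u a ⊓ s.sup' hs u)| ≤ 3 ^ s.card * B := by
      rw [Finset.sup'_inf_distrib_left]
      refine ih (fun i hi => S.inf_mem hua (hu i (hsub hi))) fun t ht htne => ?_
      rw [← Finset.inf_inf'_eq_inf'_inf,
        ← Finset.inf'_cons htne u (hb := Finset.notMem_mono ht ha)]
      exact hB _ (Finset.cons_subset_cons.mpr ht) _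
    have hval := hV _ hua _ (S.supClosed.finsetSup'_mem hs fun i hi => hu i (hsub hi))
    have hpow : (1 : ℝ) ≤ 3 ^ s.card := one_le_pow₀ (by norm_num)
    have hB0 : 0 ≤ B := (abs_nonneg _).trans hBa
    rw [Finset.sup'_cons hs, Finset.card_cons, pow_succ,
      show V (u a ⊔ s.sup' hs u) = V (u a) + V (s.sup' hs u) - V (u a ⊓ s.sup' hs u) by linarith]
    calc _ ≤ |V (u a) + V (s.sup' hs u)| + |V (u a ⊓ s.sup' hs u)| := abs_sub _ _
      _ ≤ |V (u a)| + |V (s.sup' hs u)| + |V (u a ⊓ s.sup' hs u)| := by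
        grw [abs_add_le (V (u a))]
      _ ≤ 3 ^ s.card * 3 * B := by nlinarith

theorem exists_abs_sub_le_mul_abs_sub_succ (φ : ℕ → ℝ) {N : ℕ} (hN : 0 < N) :
    ∃ i < N, |φ N - φ 0| ≤ N * |φ (i + 1) - φ i| := by
  have hN' : (0 : ℝ) < N := Nat.cast_pos.mpr hN
  obtain ⟨i, hi, hle⟩ := Finset.exists_le_of_sum_le (Finset.nonempty_range_iff.mpr hN.ne')
    (f := fun _ => |φ N - φ 0| / N) (g := fun i => |φ (i + 1) - φ i|) (by
      rw [Finset.sum_const, Finset.card_range, nsmul_eq_mul, mul_div_cancel₀ _ hN'.ne',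
        ← Finset.sum_range_sub]
      exact Finset.abs_sum_le_sum_abs _ _)
  exact ⟨i, Finset.mem_range.mp hi, by rwa [div_le_iff₀' hN'] at hle⟩

theorem tendstoUniformly_const_of_abs_sub_le {X : Type*} {g : ℕ → X → ℝ} {a ε : ℕ → ℝ}
    {t₀ : ℝ} (h : ∀ k y, |g k y - a k| ≤ ε k) (ha : Tendsto a atTop (𝓝 t₀))
    (hε : Tendsto ε atTop (𝓝 0)) : TendstoUniformly g (fun _ => t₀) atTop := by
  refine Metric.tendstoUniformly_iff.mpr fun δ hδ => ?_
  filter_upwards [Metric.tendsto_nhds.mp ha (δ / 2) (half_pos hδ),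
    Metric.tendsto_nhds.mp hε (δ / 2) (half_pos hδ)] with k hak hεk y
  rw [Real.dist_eq] at hak hεk ⊢
  calc |t₀ - g k y| ≤ |a k - t₀| + |g k y - a k| :=
        (abs_sub_le t₀ (a k) (g k y)).trans_eq
          (by rw [abs_sub_comm t₀, abs_sub_comm (a k) (g k y)])
    _ < δ := by linarith [h k y, le_abs_self (ε k - 0)]

section Tent

variable {X : Type*} [PseudoMetricSpace X]

theorem infClosed_lipschitzWith (K : ℝ≥0) : InfClosed {f : X → ℝ | LipschitzWith K f} :=
  fun f hf g hg => by
    have hfg := hf.min hg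
    rwa [max_self] at hfg

def tent (b r : ℝ) (i y : X) : ℝ := b - r * max (dist y i - r) 0

variable {b r : ℝ} {i y : X}

theorem tent_eq_of_dist_le (h : dist y i ≤ r) : tent b r i y = b := by
  simp [tent, max_eq_right (sub_nonpos.mpr h)]

theorem sub_mul_dist_le_tent (hr : 0 ≤ r) : b - r * dist y i ≤ tent b r i y := by
  unfold tent; nlinarith [max_le (by linarith : dist y i - r ≤ dist y i) dist_nonneg]

theorem tent_le_sub_sq (hr : 0 ≤ r) (h : 2 * r ≤ dist y i) : tent b r i y ≤ b - r ^ 2 := by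
  unfold tent; nlinarith [le_max_left (dist y i - r) 0]

theorem lipschitzWith_tent (hr : 0 ≤ r) (b : ℝ) (i : X) :
    LipschitzWith r.toNNReal (tent b r i) := by
  refine LipschitzWith.of_dist_le_mul fun x y => ?_
  rw [Real.dist_eq, Real.coe_toNNReal _ hr, tent, tent, sub_sub_sub_cancel_left, ← mul_sub,
    abs_mul, abs_of_nonneg hr]
  gcongr
  calc _ ≤ |dist y i - r - (dist x i - r)| := abs_max_sub_max_le_abs _ _ _
    _ ≤ dist x y := by rw [sub_sub_sub_cancel_right, dist_comm x y]; exact abs_dist_sub_le _ _ _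

end Tent

section Sphere

variable {n : ℕ}

theorem Sph.dist_le_two (x y : Sph n) : dist x y ≤ 2 :=
  (dist_triangle (x : Eucl n) 0 y).trans (by simp [norm_eq_of_mem_sphere]; norm_num)

theorem Sph.eq_of_dist_lt_two {x y : Sph 1} (h : dist x y < 2) : x = y := by
  have hcoord (z : Sph 1) : |(z : Eucl 1) 0| = 1 := by
    have hz := norm_eq_of_mem_sphere z
    rwa [EuclideanSpace.norm_eq, Fin.sum_univ_one, Real.norm_eq_abs, sq_abs,
      Real.sqrt_sq_eq_abs] at hz
  have hdist : dist x y = |(x : Eucl 1) 0 - (y : Eucl 1) 0| := by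
    simp [Subtype.dist_eq, EuclideanSpace.dist_eq, Real.dist_eq, Real.sqrt_sq_eq_abs]
  have hxy : (x : Eucl 1) 0 = (y : Eucl 1) 0 := by
    rw [hdist] at h
    rcases abs_eq (zero_le_one' ℝ) |>.mp (hcoord x) with hx | hx <;>
      rcases abs_eq (zero_le_one' ℝ) |>.mp (hcoord y) with hy | hy <;>
      rw [hx, hy] at h ⊢ <;> norm_num at h
  ext i
  rwa [Subsingleton.elim i 0]

theorem Sph.exists_finset_cover (hn : 1 ≤ n) {r : ℝ} (hr : 0 < r) :
    ∃ s : Finset (Sph n), s.Nonempty ∧ ∀ y, ∃ i ∈ s, dist y i ≤ r := by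
  obtain ⟨s, -, hs⟩ := isCompact_univ.elim_nhds_subcover (fun x : Sph n => closedBall x r)
    fun x _ => closedBall_mem_nhds x hr
  have hcov : ∀ y, ∃ i ∈ s, dist y i ≤ r := fun y => by simpa using hs (mem_univ y)
  obtain ⟨i, hi, -⟩ := hcov ⟨EuclideanSpace.single ⟨0, hn⟩ 1, by simp⟩
  exact ⟨s, ⟨i, hi⟩, hcov⟩

theorem ae_ne_sphMeasure (hn : 2 ≤ n) (z : Sph n) : ∀ᵐ x ∂sphMeasure n, x ≠ z := by
  have hn' : (2 : ℝ) ≤ n := by exact_mod_cast hn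
  have := Measure.nullSingletonClass_hausdorff (Sph n) (d := (n : ℝ) - 1) (by linarith)
  simp [ae_iff, sphMeasure, measure_singleton]

theorem eventually_homExt_eq_apply (x : Sph n) :
    ∀ᶠ y in 𝓝 (x : Eucl n), ∃ p : Sph n, dist p x ≤ 2 * dist y (x : Eucl n) ∧
      ∀ f : Sph n → ℝ, homExt f y = f p := by
  filter_upwards [eventually_ne_nhds (ne_zero_of_mem_unit_sphere x)] with y hy
  refine ⟨⟨‖y‖⁻¹ • y, ?_⟩, ?_, fun f => dif_neg hy⟩
  · simp [norm_smul, inv_mul_cancel₀ (norm_ne_zero_iff.mpr hy)]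
  · rw [Subtype.dist_eq, dist_eq_norm, dist_eq_norm]
    exact norm_inv_norm_smul_sub_le (norm_eq_of_mem_sphere x)

theorem sphGrad_congr {f g : Sph n → ℝ} (x : Sph n) {δ : ℝ} (hδ : 0 < δ)
    (h : ∀ y : Sph n, dist y x < δ → f y = g y) :
    sphGrad f (x : Eucl n) = sphGrad g (x : Eucl n) := by
  refine Filter.EventuallyEq.gradient_eq ?_
  filter_upwards [eventually_homExt_eq_apply x, ball_mem_nhds (x : Eucl n) (half_pos hδ)]
    with y ⟨p, hpx, hp⟩ hy
  rw [hp, hp]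
  exact h p (by linarith [mem_ball.mp hy])

theorem sphGrad_const (c : ℝ) (x : Sph n) : sphGrad (fun _ => c) (x : Eucl n) = 0 := by
  have hconst : homExt (fun _ : Sph n => c) =ᶠ[𝓝 (x : Eucl n)] fun _ => c := by
    filter_upwards [eventually_homExt_eq_apply x] with y ⟨p, _, hp⟩
    exact hp _
  rw [sphGrad, hconst.gradient_eq, gradient_fun_const]

theorem sphGrad_dim_one (f : Sph 1 → ℝ) (x : Sph 1) : sphGrad f (x : Eucl 1) = 0 := by
  rw [sphGrad_congr (g := fun _ => f x) x two_pos fun y hy => congrArg f (Sph.eq_of_dist_lt_two hy),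
    sphGrad_const]

theorem LipschitzWith.norm_sphGrad_le {f : Sph n → ℝ} {K : ℝ≥0} (hf : LipschitzWith K f)
    (x : Sph n) : ‖sphGrad f (x : Eucl n)‖ ≤ 2 * K := by
  rw [sphGrad, gradient, LinearIsometryEquiv.norm_map]
  obtain ⟨p, hpx, hp⟩ := (eventually_homExt_eq_apply x).self_of_nhds
  have hpx : p = x := dist_le_zero.mp (by simpa using hpx)
  refine norm_fderiv_le_of_lip' ℝ (by positivity) ?_
  filter_upwards [eventually_homExt_eq_apply x] with y ⟨q, hqx, hq⟩
  rw [hq, hp, hpx, ← dist_eq_norm, ← dist_eq_norm]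
  calc dist (f q) (f x) ≤ K * dist q x := hf.dist_le_mul q x
    _ ≤ 2 * K * dist y (x : Eucl n) := by nlinarith [K.coe_nonneg]

end Sphere

section LipschitzFunctions

variable {n : ℕ} {V : (Sph n → ℝ) → ℝ}

def lipSublattice (n : ℕ) : Sublattice (Sph n → ℝ) where
  carrier := {f | IsLip f}
  supClosed' := fun _ ⟨K, hf⟩ _ ⟨L, hg⟩ => ⟨max K L, hf.max hg⟩
  infClosed' := fun _ ⟨K, hf⟩ _ ⟨L, hg⟩ => ⟨max K L, hf.min hg⟩

theorem IsValuation.add_eq (hV : IsValuation V) :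
    ∀ f ∈ lipSublattice n, ∀ g ∈ lipSublattice n, V (f ⊔ g) + V (f ⊓ g) = V f + V g :=
  fun f hf g hg => hV f g hf hg

theorem IsValuation.apply_truncate (hV : IsValuation V) {f : Sph n → ℝ} (hf : IsLip f)
    {a b : ℝ} (hab : a ≤ b) :
    V ((f ⊔ fun _ => a) ⊓ fun _ => b) =
      V (f ⊔ fun _ => a) + V (fun _ => b) - V (f ⊔ fun _ => b) := by
  have h := hV (f ⊔ fun _ => a) (fun _ => b) ⟨_, hf.choose_spec.max_const a⟩ ⟨0, .const b⟩
  rw [sup_assoc, sup_of_le_right (show (fun _ : Sph n => a) ≤ fun _ => b from fun _ => hab)] at h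
  linarith

/-- Pigeonhole over the levels `tᵢ = -M + 2iM/N`: as `f ⊔ t₀ = f` and `f ⊔ t_N = M`, some
increment of `i ↦ V (f ⊔ tᵢ)` is at least `(|V f| - c₀) / N`, and by `apply_truncate` it
differs from `V` of the truncation of `f` to `[tᵢ, tᵢ₊₁]` by `V tᵢ₊₁`. -/
theorem IsValuation.exists_thin_truncation (hV : IsValuation V) {M c₀ : ℝ} (hM : 0 ≤ M)
    (hc₀ : ∀ t ∈ Icc (-M) M, |V (fun _ => t)| ≤ c₀) {f : Sph n → ℝ} (hf : NormBound M f)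
    {N : ℕ} (hN : 0 < N) :
    ∃ a ∈ Icc (-M) M, ∃ h : Sph n → ℝ, LipschitzWith M.toNNReal h ∧
      (∀ x, a ≤ h x ∧ h x ≤ a + 2 * M / N) ∧ |V f| ≤ N * (|V h| + c₀) + c₀ := by
  have hN' : (0 : ℝ) < N := Nat.cast_pos.mpr hN
  have hgap : 0 ≤ 2 * M / N := by positivity
  set level : ℕ → ℝ := fun i => -M + i * (2 * M / N) with hlevel
  have hlevel_mem : ∀ i ≤ N, level i ∈ Icc (-M) M := fun i hi => by
    have hi' : (i : ℝ) * (2 * M / N) ≤ 2 * M := by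
      calc (i : ℝ) * (2 * M / N) ≤ N * (2 * M / N) := by gcongr
        _ = 2 * M := mul_div_cancel₀ _ hN'.ne'
    constructor <;> nlinarith [mul_nonneg (Nat.cast_nonneg (α := ℝ) i) hgap]
  have hlevelN : level N = M := by simp only [hlevel]; field_simp; ring
  set φ : ℕ → ℝ := fun i => V (f ⊔ fun _ => level i)
  have hφ0 : φ 0 = V f := by
    simp only [φ, hlevel, Nat.cast_zero, zero_mul, add_zero]
    exact congrArg V (sup_of_le_left fun x => (abs_le.mp (hf.1 x)).1)
  have hφN : φ N = V fun _ => M := by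
    simp only [φ, hlevelN]
    exact congrArg V (sup_of_le_right fun x => (abs_le.mp (hf.1 x)).2)
  obtain ⟨i, hi, hφi⟩ := exists_abs_sub_le_mul_abs_sub_succ φ hN
  have hstep : level (i + 1) = level i + 2 * M / N := by simp only [hlevel]; push_cast; ring
  set h := (f ⊔ fun _ => level i) ⊓ fun _ => level (i + 1)
  have hVh := hV.apply_truncate ⟨_, hf.2⟩ (a := level i) (b := level (i + 1)) (by linarith)
  refine ⟨level i, hlevel_mem i hi.le, h, (hf.2.max_const _).min_const _,
    fun x => ⟨le_min (le_max_right _ _) (by linarith), (min_le_right _ _).trans hstep.le⟩, ?_⟩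
  have hc_next := hc₀ _ (hlevel_mem (i + 1) hi)
  have hc_M := hc₀ M ⟨by linarith, le_rfl⟩
  have hinc : |φ (i + 1) - φ i| ≤ |V h| + c₀ := by
    rw [show φ (i + 1) - φ i = V (fun _ => level (i + 1)) - V h by simp only [φ]; linarith]
    linarith [abs_sub (V fun _ => level (i + 1)) (V h)]
  have hfM : |V f| ≤ |φ N - φ 0| + c₀ := by
    rw [hφ0, hφN]
    linarith [abs_sub_abs_le_abs_sub (V f) (V fun _ => M), abs_sub_comm (V f) (V fun _ => M)]
  nlinarith

/-- `h` is the supremum over `i ∈ s` of `h ⊓ tent (a + r²) r i`, so by inclusion–exclusion some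
infimum `h ⊓ w` of these carries a `3 ^ #s`-th of `V h`. Off the `2r`-ball about a centre `z` of
`w`, the tent drops to `a ≤ h`, so there `h ⊓ w = w`. -/
theorem IsValuation.exists_localized (hV : IsValuation V) {r : ℝ} (hr0 : 0 < r) (hr1 : r ≤ 1)
    {s : Finset (Sph n)} (hs : s.Nonempty) (hcov : ∀ y, ∃ i ∈ s, dist y i ≤ r) {K : ℝ≥0}
    (hrK : r.toNNReal ≤ K) {h : Sph n → ℝ} (hh : LipschitzWith K h) {a : ℝ}
    (hha : ∀ x, a ≤ h x ∧ h x ≤ a + r ^ 2) {B : ℝ} (hB : 3 ^ s.card * B < |V h|) :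
    ∃ g w : Sph n → ℝ, ∃ z : Sph n, LipschitzWith K g ∧ LipschitzWith r.toNNReal w ∧
      (∀ y, 2 * r ≤ dist y z → g y = w y) ∧ (∀ y, |g y - a| ≤ 2 * r) ∧ B < |V g| := by
  set c : Sph n → Sph n → ℝ := fun i => tent (a + r ^ 2) r i
  have hcLip : ∀ i, LipschitzWith r.toNNReal (c i) := fun i => lipschitzWith_tent hr0.le _ i
  have hsup : s.sup' hs (fun i => h ⊓ c i) = h := by
    funext y
    rw [Finset.sup'_apply]
    refine le_antisymm (Finset.sup'_le _ _ fun i _ => inf_le_left) ?_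
    obtain ⟨i, hi, hyi⟩ := hcov y
    refine le_trans ?_ (Finset.le_sup' (fun i => (h ⊓ c i) y) hi)
    simp [c, tent_eq_of_dist_le hyi, (hha y).2]
  obtain ⟨t, -, ht, hVt⟩ : ∃ t ⊆ s, ∃ ht : t.Nonempty, B < |V (h ⊓ t.inf' ht c)| := by
    by_contra! hall
    have hsum := abs_finset_sup'_le_of_valuation hV.add_eq hs
      (fun i _ => (lipSublattice n).inf_mem ⟨K, hh⟩ ⟨_, hcLip i⟩)
      fun t ht htne => by rw [← Finset.inf_inf'_eq_inf'_inf]; exact hall t ht htne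
    rw [hsup] at hsum
    linarith
  obtain ⟨z, hz⟩ := ht
  set w := t.inf' ⟨z, hz⟩ c
  have hwLip : LipschitzWith r.toNNReal w :=
    (infClosed_lipschitzWith _).finsetInf'_mem _ fun i _ => hcLip i
  have hw_le : ∀ y, w y ≤ c z y := fun y => Finset.inf'_le c hz y
  have hw_ge : ∀ y, a + r ^ 2 - 2 * r ≤ w y := fun y => by
    rw [show w y = t.inf' ⟨z, hz⟩ (fun i => c i y) from Finset.inf'_apply _ _ _]
    refine Finset.le_inf' _ _ fun i _ => ?_
    nlinarith [sub_mul_dist_le_tent (b := a + r ^ 2) hr0.le (i := i) (y := y), Sph.dist_le_two y i]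
  refine ⟨h ⊓ w, w, z, (infClosed_lipschitzWith K) hh (hwLip.weaken hrK), hwLip,
    fun y hy => min_eq_right ?_, fun y => abs_le.mpr ⟨?_, ?_⟩, hVt⟩
  · linarith [hw_le y, tent_le_sub_sq (b := a + r ^ 2) hr0.le hy, (hha y).1]
  · have hmin : a - 2 * r ≤ min (h y) (w y) :=
      le_min (by linarith [(hha y).1]) (by nlinarith [hw_ge y])
    simp only [Pi.inf_apply]
    linarith
  · simp only [Pi.inf_apply]
    nlinarith [min_le_left (h y) (w y), (hha y).2]

theorem tauTendsto_const {t : ℕ → ℝ} {t₀ : ℝ} (ht : Tendsto t atTop (𝓝 t₀)) :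
    TauTendsto (n := n) (fun k _ => t k) fun _ => t₀ :=
  ⟨tendstoUniformly_const_of_abs_sub_le (ε := 0) (fun _ _ => by simp) ht tendsto_const_nhds,
    ⟨0, fun _ => .of_forall fun x => by simp [sphGrad_const]⟩,
    .of_forall fun x => by simp [sphGrad_const]⟩

theorem TauContinuous.continuous_apply_const (hτ : TauContinuous V) :
    Continuous fun t : ℝ => V fun _ => t :=
  continuous_iff_seqContinuous.mpr fun _ _ ht =>
    hτ _ _ (fun _ => ⟨0, .const _⟩) ⟨0, .const _⟩ (tauTendsto_const ht)

theorem IsValuation.exists_concentrated_of_unbounded (hn : 1 ≤ n) (hV : IsValuation V)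
    (hτ : TauContinuous V) {M : ℝ} (hM : 0 ≤ M)
    (hU : ∀ B, ∃ f : Sph n → ℝ, NormBound M f ∧ B < |V f|) {r : ℝ} (hr0 : 0 < r)
    (hr1 : r ≤ 1) (B : ℝ) :
    ∃ a ∈ Icc (-M) M, ∃ g w : Sph n → ℝ, ∃ z : Sph n, LipschitzWith (max M.toNNReal 1) g ∧
      LipschitzWith r.toNNReal w ∧ (∀ y, 2 * r ≤ dist y z → g y = w y) ∧
      (∀ y, |g y - a| ≤ 2 * r) ∧ B < |V g| := by
  obtain ⟨c₀, hc₀⟩ := (isCompact_Icc (a := -M) (b := M)).exists_bound_of_continuousOn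
    hτ.continuous_apply_const.continuousOn
  obtain ⟨s, hs, hcov⟩ := Sph.exists_finset_cover hn hr0
  set N : ℕ := ⌈2 * M / r ^ 2⌉₊ + 1
  have hN : 0 < N := Nat.succ_pos _
  have hgap : 2 * M / N ≤ r ^ 2 := by
    rw [div_le_iff₀ (by positivity), ← div_le_iff₀' (by positivity)]
    exact (Nat.le_ceil _).trans (by norm_cast; omega)
  obtain ⟨f, hf, hVf⟩ := hU (N * (3 ^ s.card * B + c₀) + c₀)
  obtain ⟨a, ha, h, hh, hha, hVh⟩ := hV.exists_thin_truncation hM hc₀ hf hN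
  obtain ⟨g, w, z, hgLip, hwLip, hgw, hga, hVg⟩ := hV.exists_localized hr0 hr1 hs hcov
    ((Real.toNNReal_le_one.mpr hr1).trans (le_max_right _ _)) (hh.weaken (le_max_left _ _))
    (fun x => ⟨(hha x).1, (hha x).2.trans (by linarith)⟩)
    (B := B) (by nlinarith [(Nat.cast_pos (α := ℝ)).mpr hN])
  exact ⟨a, ha, g, w, z, hgLip, hwLip, hgw, hga, hVg⟩

/-- Near `x ≠ z₀` the function `g k` eventually agrees with the `r k`-Lipschitz `w k`. -/
theorem tendsto_sphGrad_of_concentrating {g w : ℕ → Sph n → ℝ} {r : ℕ → ℝ} {z : ℕ → Sph n}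
    {x z₀ : Sph n} (hx : x ≠ z₀) (hr0 : ∀ k, 0 ≤ r k)
    (hwr : ∀ k, LipschitzWith (r k).toNNReal (w k))
    (hgw : ∀ k y, 2 * r k ≤ dist y (z k) → g k y = w k y)
    (hz : Tendsto z atTop (𝓝 z₀)) (hr : Tendsto r atTop (𝓝 0)) :
    Tendsto (fun k => sphGrad (g k) (x : Eucl n)) atTop (𝓝 0) := by
  have hδ : 0 < dist x z₀ := dist_pos.mpr hx
  have hnear : ∀ᶠ k in atTop, ‖sphGrad (g k) (x : Eucl n)‖ ≤ 2 * r k := by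
    filter_upwards [Metric.tendsto_nhds.mp hz _ (by positivity : 0 < dist x z₀ / 4),
      hr.eventually (gt_mem_nhds (by positivity : 0 < dist x z₀ / 8))] with k hzk hrk
    rw [sphGrad_congr x (by positivity : 0 < dist x z₀ / 4) fun y hy => hgw k y ?_]
    · simpa [Real.coe_toNNReal _ (hr0 k)] using (hwr k).norm_sphGrad_le x
    · linarith [dist_triangle4 x y (z k) z₀, dist_comm x y]
  exact squeeze_zero_norm' hnear (by simpa using hr.const_mul 2)

/-- The gradients converge off `z₀`, a null set when `n ≥ 2`; on the two-point sphere `S⁰`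
every spherical gradient vanishes. -/
theorem tauTendsto_of_concentrating (hn : 1 ≤ n) {g w : ℕ → Sph n → ℝ} {a r : ℕ → ℝ}
    {z : ℕ → Sph n} {t₀ : ℝ} {z₀ : Sph n} {L : ℝ≥0} (hgL : ∀ k, LipschitzWith L (g k))
    (hr0 : ∀ k, 0 ≤ r k) (hwr : ∀ k, LipschitzWith (r k).toNNReal (w k))
    (hgw : ∀ k y, 2 * r k ≤ dist y (z k) → g k y = w k y)
    (hga : ∀ k y, |g k y - a k| ≤ 2 * r k) (ha : Tendsto a atTop (𝓝 t₀))
    (hz : Tendsto z atTop (𝓝 z₀)) (hr : Tendsto r atTop (𝓝 0)) :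
    TauTendsto g fun _ => t₀ := by
  refine ⟨tendstoUniformly_const_of_abs_sub_le hga ha (by simpa using hr.const_mul 2),
    ⟨2 * L, fun k => .of_forall (hgL k).norm_sphGrad_le⟩, ?_⟩
  simp only [sphGrad_const]
  rcases hn.eq_or_lt with rfl | hn
  · exact .of_forall fun x => by simpa only [sphGrad_dim_one] using tendsto_const_nhds
  · filter_upwards [ae_ne_sphMeasure hn z₀] with x hx
    exact tendsto_sphGrad_of_concentrating hx hr0 hwr hgw hz hr

end LipschitzFunctions

/-- a τ-continuous valuation on `Lip(S^{n-1})` is bounded on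
`‖·‖`-bounded sets. -/
theorem tau_continuous_valuation_bounded_on_bounded {n : ℕ} (hn : 1 ≤ n)
    (V : (Sph n → ℝ) → ℝ) (hval : IsValuation V) (hτ : TauContinuous V) :
    ∀ M : ℝ, 0 < M → ∃ B : ℝ, ∀ f : Sph n → ℝ, NormBound M f → |V f| ≤ B := by
  intro M hM
  by_contra! hU
  choose a ha g w z hgL hwL hgw hga hVg using fun j : ℕ =>
    hval.exists_concentrated_of_unbounded hn hτ hM.le hU (r := 1 / (j + 1)) (by positivity)
      (div_le_one_of_le₀ (by simp) (by positivity)) j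
  obtain ⟨⟨t₀, z₀⟩, -, σ, hσ, hlim⟩ := (isCompact_Icc.prod isCompact_univ).tendsto_subseq
    fun j => mk_mem_prod (ha j) (mem_univ (z j))
  have hconc := tauTendsto_of_concentrating hn (fun k => hgL (σ k)) (fun k => by positivity)
    (fun k => hwL (σ k)) (fun k => hgw (σ k)) (fun k => hga (σ k))
    ((continuous_fst.tendsto _).comp hlim) ((continuous_snd.tendsto _).comp hlim)
    (tendsto_one_div_add_atTop_nhds_zero_nat.comp hσ.tendsto_atTop)
  have hVconv := hτ _ _ (fun k => ⟨_, hgL (σ k)⟩) ⟨0, .const t₀⟩ hconc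
  have hVunbdd : Tendsto (fun k => |V (g (σ k))|) atTop atTop :=
    tendsto_atTop_mono (fun k => (hVg (σ k)).le)
      (tendsto_natCast_atTop_atTop.comp hσ.tendsto_atTop)
  exact not_tendsto_nhds_of_tendsto_atTop hVunbdd _ hVconv.abs
end
end

section
/- Let W: Lip(S¹) → ℝ be a τ-continuous rotation-invariant valuation with W(λ·1) = 0 for all λ ∈ ℝ. For γ ≥ 0, 0 < d ≤ π/2, 0 ≤ ℓ ≤ 2(π−d) and t₀ ∈ [0,2π], let h_{γ,d,ℓ,t₀} be the trapezoidal function equal to γ(t−t₀) on (t₀, t₀+d], to γd on (t₀+d, t₀+d+ℓ], to γ(t₀+2d+ℓ−t) on (t₀+d+ℓ, t₀+2d+ℓ] (intervals mod 2π), and 0 elsewhere. Then W(h_{γ,d,ℓ,t₀}) = W(h_{γ,d,0,0}); i.e., W does not depend on the length ℓ of the flat plateau or the position t₀. -/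
open MeasureTheory Set Filter Topology Classical
open scoped ENNReal NNReal

noncomputable section

/-- A function `f : ℝ → ℝ` represents an element of `Lip(S¹)`: it is `2π`-periodic
(identifying functions on `S¹` with functions on `[0,2π]` with equal endpoint values)
and Lipschitz. -/
def LipC (f : ℝ → ℝ) : Prop :=
  Function.Periodic f (2 * Real.pi) ∧ ∃ L : ℝ≥0, LipschitzWith L f

/-- τ-convergence in `Lip(S¹)`: uniform convergence, a uniform a.e. bound on the
derivatives, and a.e. convergence of the derivatives. -/
def TauTendstoC (fk : ℕ → ℝ → ℝ) (f : ℝ → ℝ) : Prop :=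
  TendstoUniformly fk f atTop ∧
  (∃ C : ℝ, ∀ k, ∀ᵐ t ∂(volume.restrict (Set.Ioc 0 (2 * Real.pi))),
    |deriv (fk k) t| ≤ C) ∧
  (∀ᵐ t ∂(volume.restrict (Set.Ioc 0 (2 * Real.pi))),
    Tendsto (fun k => deriv (fk k) t) atTop (𝓝 (deriv f t)))

/-- `V` is a valuation on `Lip(S¹)`. -/
def IsValC (V : (ℝ → ℝ) → ℝ) : Prop :=
  ∀ f g : ℝ → ℝ, LipC f → LipC g → V (f ⊔ g) + V (f ⊓ g) = V f + V g

/-- τ-continuity of a functional on `Lip(S¹)`. -/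
def TauContC (V : (ℝ → ℝ) → ℝ) : Prop :=
  ∀ (fk : ℕ → ℝ → ℝ) (f : ℝ → ℝ), (∀ k, LipC (fk k)) → LipC f →
    TauTendstoC fk f → Tendsto (fun k => V (fk k)) atTop (𝓝 (V f))

/-- Rotation invariance on `Lip(S¹)`: invariance under rotations of the circle, i.e.
translations of the variable. -/
def RotInvC (V : (ℝ → ℝ) → ℝ) : Prop :=
  ∀ (c : ℝ) (f : ℝ → ℝ), LipC f → V (fun t => f (t + c)) = V f

/-- The trapezoidal function `h_{γ,d,ℓ,t₀}` on the circle: starting at `t₀` it rises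
with slope `γ` for time `d`, stays at the plateau value `γd` for time `ℓ`, decreases
with slope `γ` for time `d`, and is `0` elsewhere (everything mod `2π`). -/
noncomputable def hTrap (γ d ℓ t₀ : ℝ) (t : ℝ) : ℝ :=
  max 0 (min (γ * d)
    (min (γ * (2 * Real.pi * Int.fract ((t - t₀) / (2 * Real.pi))))
      (γ * (2 * d + ℓ - 2 * Real.pi * Int.fract ((t - t₀) / (2 * Real.pi))))))

/-!
Rotation invariance removes `t₀`. For plateau lengths `a, b ≥ 0` with `2d + a + b ≤ 2π`, the
pointwise max of `h_{γ,d,a,0}` and `h_{γ,d,b,a}` is `h_{γ,d,a+b,0}` and their min is `h_{γ,d,0,a}`,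
so the valuation property makes `g(ℓ) = W(h_{γ,d,ℓ,0}) - W(h_{γ,d,0,0})` additive in `ℓ`.
Two antipodal trapezoids of plateau `2π - 2d` have as max the constant `γd`, and as min the max
of two antipodal trapezoids of plateau `π - 2d`, whose min is `0`. Since `W` kills constants this
gives `g(2π - 2d) = g(π - 2d)`, hence `g(π) = 0` by additivity. Halving gives `g(π / 2^m) = 0`,
so `g` vanishes at all dyadic multiples `nπ / 2^m`, and `τ`-continuity along dyadic
approximations of `ℓ` (uniform convergence, derivatives bounded by `γ` and eventually constant
away from the break points) gives `g(ℓ) = 0`.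
-/

open Real

theorem Function.Periodic.lipschitzWith_of_lipschitzOnWith_Icc {α : Type*}
    [PseudoMetricSpace α] {f : ℝ → α} {p : ℝ} {K : ℝ≥0} (hf : Function.Periodic f p)
    (hp : 0 < p) (hK : LipschitzOnWith K f (Icc 0 p)) : LipschitzWith K f := by
  have hmod : ∀ s, f (toIcoMod hp 0 s) = f s := fun s => by
    rw [← self_sub_toIcoDiv_zsmul, hf.sub_zsmul_eq]
  refine LipschitzWith.of_dist_le_mul fun s t => ?_
  wlog hst : s ≤ t generalizing s t
  · rw [dist_comm, dist_comm s]; exact this t s (le_of_not_ge hst)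
  -- Replace `s` by `x ∈ [0, p)` and `t` by `x + r` with `r ∈ [0, p)`: the segment `[x, x + r]`
  -- then crosses at most the one period boundary `p`.
  have hx := toIcoMod_mem_Ico' hp s
  have hr := toIcoMod_mem_Ico' hp (t - s)
  set x := toIcoMod hp 0 s
  set r := toIcoMod hp 0 (t - s)
  have hrst : r ≤ t - s := by
    rcases lt_or_ge (t - s) p with h | h
    · exact ((toIcoMod_eq_self hp).2 ⟨by linarith, by linarith⟩).le
    · linarith [hr.2]
  have hft : f t = f (x + r) := by
    have hxr : x + r = t - (toIcoDiv hp 0 s + toIcoDiv hp 0 (t - s)) • p := by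
      simp only [x, r, ← self_sub_toIcoDiv_zsmul, add_zsmul]; abel
    rw [hxr, hf.sub_zsmul_eq]
  rw [← hmod s, hft, dist_comm s t, Real.dist_eq t s, abs_of_nonneg (by linarith)]
  rcases le_or_gt (x + r) p with h | h
  · calc dist (f x) (f (x + r)) ≤ K * dist x (x + r) :=
          hK.dist_le_mul x ⟨hx.1, hx.2.le⟩ (x + r) ⟨by linarith [hx.1, hr.1], h⟩
      _ ≤ K * (t - s) := by
          rw [Real.dist_eq, abs_sub_comm, add_sub_cancel_left, abs_of_nonneg hr.1]
          gcongr
  · have hp0 : f p = f 0 := by simpa using hf 0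
    have hwrap : f (x + r) = f (x + r - p) := (hf.sub_eq _).symm
    calc dist (f x) (f (x + r)) ≤ dist (f x) (f p) + dist (f 0) (f (x + r - p)) := by
          rw [← hp0, ← hwrap]; exact dist_triangle _ _ _
      _ ≤ K * dist x p + K * dist 0 (x + r - p) := by
          gcongr
          · exact hK.dist_le_mul x ⟨hx.1, hx.2.le⟩ p ⟨hp.le, le_rfl⟩
          · exact hK.dist_le_mul 0 ⟨le_rfl, hp.le⟩ _ ⟨by linarith, by linarith [hx.2, hr.2]⟩
      _ ≤ K * (t - s) := by
          rw [Real.dist_eq, Real.dist_eq, abs_of_neg (by linarith [hx.2]),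
            abs_of_neg (by linarith), ← mul_add]
          gcongr
          linarith

section ToIcoMod
variable {α : Type*} [AddCommGroup α] [LinearOrder α] [IsOrderedAddMonoid α] [Archimedean α]
  {p a b : α}

lemma toIcoMod_sub_of_le (hp : 0 < p) (ha : 0 ≤ a) (h : a ≤ toIcoMod hp 0 b) :
    toIcoMod hp 0 (b - a) = toIcoMod hp 0 b - a := by
  have hb : toIcoMod hp 0 b < a + p :=
    (toIcoMod_mem_Ico' hp b).2.trans_le (le_add_of_nonneg_left ha)
  rw [toIcoMod_sub_eq_sub, zero_add, ← toIcoMod_toIcoMod hp a 0 b,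
    (toIcoMod_eq_self hp).2 ⟨h, hb⟩]

lemma toIcoMod_sub_of_lt (hp : 0 < p) (ha : a ≤ p) (h : toIcoMod hp 0 b < a) :
    toIcoMod hp 0 (b - a) = toIcoMod hp 0 b + p - a := by
  have hb : a ≤ toIcoMod hp 0 b + p :=
    ha.trans (le_add_of_nonneg_left (toIcoMod_mem_Ico' hp b).1)
  rw [toIcoMod_sub_eq_sub, zero_add, ← toIcoMod_toIcoMod hp a 0 b, ← toIcoMod_add_right,
    (toIcoMod_eq_self hp).2 ⟨hb, add_lt_add_of_lt_of_le h le_rfl⟩]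

end ToIcoMod

lemma eventually_ne_and_lt_iff {α : Type*} [TopologicalSpace α] [LinearOrder α] [OrderTopology α]
    {a c : α} (h : a ≠ c) : ∀ᶠ x in 𝓝 c, a ≠ x ∧ (a < x ↔ a < c) := by
  rcases h.lt_or_gt with h | h
  · filter_upwards [eventually_gt_nhds h] with x hx using ⟨hx.ne, iff_of_true hx h⟩
  · filter_upwards [eventually_lt_nhds h] with x hx using ⟨hx.ne', iff_of_false hx.not_gt h.not_gt⟩

/-- The trapezoid of `hTrap` with unit slope, in the coordinate `y ∈ [0, 2π)` measured from `t₀`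
(see `hTrap_apply`). -/
def trapProfile (d ℓ y : ℝ) : ℝ := max 0 (min d (min y (2 * d + ℓ - y)))

section TrapProfile
variable {d ℓ ℓ' y a b : ℝ}

lemma trapProfile_nonneg (d ℓ y : ℝ) : 0 ≤ trapProfile d ℓ y := le_max_left _ _

lemma trapProfile_eq_zero (h : y ≤ 0 ∨ 2 * d + ℓ ≤ y) : trapProfile d ℓ y = 0 := by
  simp only [trapProfile, min_def, max_def]; split_ifs <;> rcases h with h | h <;> linarith

lemma trapProfile_eq_of_le (hd : 0 ≤ d) (hy : y ≤ ℓ) (hℓ : ℓ ≤ ℓ') :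
    trapProfile d ℓ y = trapProfile d ℓ' y := by
  simp only [trapProfile, min_def, max_def]; split_ifs <;> linarith

lemma trapProfile_lipschitzWith (d ℓ : ℝ) : LipschitzWith 1 (trapProfile d ℓ) := by
  refine LipschitzWith.of_dist_le_mul fun y z => ?_
  rw [NNReal.coe_one, one_mul, Real.dist_eq, Real.dist_eq, abs_sub_le_iff]
  constructor <;> (simp only [trapProfile, min_def, max_def]; split_ifs <;>
    linarith [le_abs_self (y - z), neg_abs_le (y - z)])

lemma abs_trapProfile_sub_le (d ℓ ℓ' y : ℝ) :
    |trapProfile d ℓ' y - trapProfile d ℓ y| ≤ |ℓ' - ℓ| := by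
  rw [abs_sub_le_iff]
  constructor <;> (simp only [trapProfile, min_def, max_def]; split_ifs <;>
    linarith [le_abs_self (ℓ' - ℓ), neg_abs_le (ℓ' - ℓ)])

lemma max_trapProfile_add (ha : 0 ≤ a) (hb : 0 ≤ b) :
    max (trapProfile d a (y + a)) (trapProfile d b y) = trapProfile d (a + b) (y + a) := by
  have e₁ : 2 * d + a - (y + a) = 2 * d - y := by ring
  have e₂ : 2 * d + (a + b) - (y + a) = 2 * d + b - y := by ring
  have hclamp : Monotone fun w : ℝ => max 0 (min d w) :=
    monotone_const.max (monotone_const.min monotone_id)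
  simp only [trapProfile, e₁, e₂, ← hclamp.map_max]
  congr 1
  simp only [min_def, max_def]; split_ifs <;> linarith

lemma min_trapProfile_add (ha : 0 ≤ a) (hb : 0 ≤ b) :
    min (trapProfile d a (y + a)) (trapProfile d b y) = trapProfile d 0 y := by
  have e₁ : 2 * d + a - (y + a) = 2 * d - y := by ring
  have hclamp : Monotone fun w : ℝ => max 0 (min d w) :=
    monotone_const.max (monotone_const.min monotone_id)
  simp only [trapProfile, e₁, ← hclamp.map_min, add_zero]
  congr 1
  simp only [min_def]; split_ifs <;> linarith

lemma trapProfile_antipodal (hd : 0 ≤ d) (hd2 : d ≤ π / 2) (hy : y ∈ Icc 0 π) :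
    max (trapProfile d (2 * π - 2 * d) y) (trapProfile d (2 * π - 2 * d) (y + π)) = d ∧
    min (trapProfile d (2 * π - 2 * d) y) (trapProfile d (2 * π - 2 * d) (y + π)) =
      max (trapProfile d (π - 2 * d) y) (trapProfile d (π - 2 * d) (y + π)) ∧
    min (trapProfile d (π - 2 * d) y) (trapProfile d (π - 2 * d) (y + π)) = 0 := by
  obtain ⟨hy0, hyπ⟩ := hy
  have hN₁ : trapProfile d (2 * π - 2 * d) y = min d y := by
    simp only [trapProfile, min_def, max_def]; split_ifs <;> linarith
  have hN₂ : trapProfile d (2 * π - 2 * d) (y + π) = min d (π - y) := by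
    simp only [trapProfile, min_def, max_def]; split_ifs <;> linarith
  have hB₁ : trapProfile d (π - 2 * d) y = min d (min y (π - y)) := by
    simp only [trapProfile, min_def, max_def]; split_ifs <;> linarith
  have hB₂ : trapProfile d (π - 2 * d) (y + π) = 0 := trapProfile_eq_zero (.inr (by linarith))
  have hB₁0 : 0 ≤ min d (min y (π - y)) := le_min hd (le_min hy0 (by linarith))
  rw [hN₁, hN₂, hB₁, hB₂, ← inf_inf_distrib_left, max_eq_left hB₁0, min_eq_right hB₁0]
  refine ⟨?_, rfl, rfl⟩
  simp only [min_def, max_def]; split_ifs <;> linarith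

end TrapProfile

def trapSlope (d ℓ t : ℝ) : ℝ :=
  if t < d then 1 else if t < d + ℓ then 0 else if t < 2 * d + ℓ then -1 else 0

lemma hasDerivAt_trapProfile {d ℓ t : ℝ} (hd : 0 ≤ d) (hℓ : 0 ≤ ℓ) (ht : 0 < t) (h₁ : t ≠ d)
    (h₂ : t ≠ d + ℓ) (h₃ : t ≠ 2 * d + ℓ) :
    HasDerivAt (trapProfile d ℓ) (trapSlope d ℓ t) t := by
  have near : ∀ {a b : ℝ} {g : ℝ → ℝ}, a < t → t < b →
      (∀ s ∈ Ioo a b, trapProfile d ℓ s = g s) → trapProfile d ℓ =ᶠ[𝓝 t] g :=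
    fun ha hb h => Filter.eventually_of_mem (Ioo_mem_nhds ha hb) h
  unfold trapSlope
  split_ifs with c₁ c₂ c₃
  · exact (hasDerivAt_id t).congr_of_eventuallyEq <| near ht c₁ fun s ⟨hs₁, hs₂⟩ => by
      simp only [trapProfile, id, min_def, max_def]; split_ifs <;> linarith
  · exact (hasDerivAt_const t d).congr_of_eventuallyEq <|
      near (lt_of_le_of_ne (not_lt.1 c₁) h₁.symm) c₂ fun s ⟨hs₁, hs₂⟩ => by
        simp only [trapProfile, min_def, max_def]; split_ifs <;> linarith
  · exact ((hasDerivAt_id t).const_sub (2 * d + ℓ)).congr_of_eventuallyEq <|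
      near (lt_of_le_of_ne (not_lt.1 c₂) h₂.symm) c₃ fun s ⟨hs₁, hs₂⟩ => by
        simp only [trapProfile, id, min_def, max_def]; split_ifs <;> linarith
  · exact (hasDerivAt_const t 0).congr_of_eventuallyEq <|
      near (lt_of_le_of_ne (not_lt.1 c₃) h₃.symm) (lt_add_one t) fun s ⟨hs₁, _⟩ =>
        trapProfile_eq_zero (.inr hs₁.le)

section Trapezoid
variable {γ d ℓ t₀ a b t : ℝ}

lemma hTrap_apply (hγ : 0 ≤ γ) (t : ℝ) :
    hTrap γ d ℓ t₀ t = γ * trapProfile d ℓ (toIcoMod two_pi_pos 0 (t - t₀)) := by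
  simp only [hTrap, trapProfile, toIcoMod_eq_fract_mul, mul_max_of_nonneg _ _ hγ,
    mul_min_of_nonneg _ _ hγ, mul_zero, mul_comm _ (2 * π)]

lemma hTrap_eq_comp_add (γ d ℓ t₀ : ℝ) :
    hTrap γ d ℓ t₀ = fun t => hTrap γ d ℓ 0 (t + -t₀) := by
  funext t
  simp only [hTrap, sub_zero, ← sub_eq_add_neg]

lemma hTrap_periodic (γ d ℓ t₀ : ℝ) : Function.Periodic (hTrap γ d ℓ t₀) (2 * π) := by
  intro t
  simp only [hTrap, add_sub_right_comm, add_div, div_self two_pi_pos.ne', Int.fract_add_one]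

lemma hTrap_eqOn_Icc (hγ : 0 ≤ γ) (hsum : 2 * d + ℓ ≤ 2 * π) :
    EqOn (hTrap γ d ℓ 0) (fun t => γ * trapProfile d ℓ t) (Icc 0 (2 * π)) := by
  intro t ⟨ht0, ht⟩
  rw [hTrap_apply hγ, sub_zero]
  rcases ht.lt_or_eq with ht | rfl
  · rw [(toIcoMod_eq_self two_pi_pos).2 ⟨ht0, by rwa [zero_add]⟩]
  · show _ = γ * trapProfile d ℓ (2 * π)
    rw [toIcoMod_eq_fract_mul, div_self two_pi_pos.ne', Int.fract_one, zero_mul,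
      trapProfile_eq_zero (.inl le_rfl), trapProfile_eq_zero (.inr hsum)]

lemma lipschitzWith_hTrap (hγ : 0 ≤ γ) (hsum : 2 * d + ℓ ≤ 2 * π) :
    LipschitzWith γ.toNNReal (hTrap γ d ℓ t₀) := by
  have hIcc : LipschitzOnWith γ.toNNReal (hTrap γ d ℓ 0) (Icc 0 (2 * π)) := by
    refine LipschitzOnWith.of_dist_le_mul fun s hs t ht => ?_
    rw [hTrap_eqOn_Icc hγ hsum hs, hTrap_eqOn_Icc hγ hsum ht, Real.dist_eq, ← mul_sub,
      abs_mul, abs_of_nonneg hγ, Real.coe_toNNReal _ hγ, ← Real.dist_eq]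
    gcongr
    simpa using (trapProfile_lipschitzWith d ℓ).dist_le_mul s t
  have h := ((hTrap_periodic γ d ℓ 0).lipschitzWith_of_lipschitzOnWith_Icc two_pi_pos
    hIcc).comp (isometry_add_right (-t₀)).lipschitz
  rw [hTrap_eq_comp_add]
  rwa [mul_one] at h

lemma lipC_hTrap (hγ : 0 ≤ γ) (hsum : 2 * d + ℓ ≤ 2 * π) : LipC (hTrap γ d ℓ t₀) :=
  ⟨hTrap_periodic γ d ℓ t₀, _, lipschitzWith_hTrap hγ hsum⟩

lemma hTrap_sup_hTrap (hγ : 0 ≤ γ) (hd : 0 ≤ d) (ha : 0 ≤ a) (hb : 0 ≤ b)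
    (hab : 2 * d + a + b ≤ 2 * π) : hTrap γ d a 0 ⊔ hTrap γ d b a = hTrap γ d (a + b) 0 := by
  funext t
  simp only [Pi.sup_apply, hTrap_apply hγ, sub_zero, ← mul_max_of_nonneg _ _ hγ]
  obtain ⟨hx0, hx⟩ := toIcoMod_mem_Ico' two_pi_pos t
  rcases le_or_gt a (toIcoMod two_pi_pos 0 t) with h | h
  · have key := max_trapProfile_add (d := d) (y := toIcoMod two_pi_pos 0 t - a) ha hb
    rw [sub_add_cancel] at key
    rw [toIcoMod_sub_of_le two_pi_pos ha h, key]
  · rw [toIcoMod_sub_of_lt two_pi_pos (by linarith) h,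
      trapProfile_eq_zero (ℓ := b) (.inr (by linarith)), max_eq_left (trapProfile_nonneg _ _ _),
      trapProfile_eq_of_le hd h.le (le_add_of_nonneg_right hb)]

lemma hTrap_inf_hTrap (hγ : 0 ≤ γ) (hd : 0 ≤ d) (ha : 0 ≤ a) (hb : 0 ≤ b)
    (hab : 2 * d + a + b ≤ 2 * π) : hTrap γ d a 0 ⊓ hTrap γ d b a = hTrap γ d 0 a := by
  funext t
  simp only [Pi.inf_apply, hTrap_apply hγ, sub_zero, ← mul_min_of_nonneg _ _ hγ]
  obtain ⟨hx0, hx⟩ := toIcoMod_mem_Ico' two_pi_pos t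
  rcases le_or_gt a (toIcoMod two_pi_pos 0 t) with h | h
  · have key := min_trapProfile_add (d := d) (y := toIcoMod two_pi_pos 0 t - a) ha hb
    rw [sub_add_cancel] at key
    rw [toIcoMod_sub_of_le two_pi_pos ha h, key]
  · rw [toIcoMod_sub_of_lt two_pi_pos (by linarith) h,
      trapProfile_eq_zero (ℓ := b) (.inr (by linarith)),
      trapProfile_eq_zero (ℓ := 0) (.inr (by linarith)), min_eq_right (trapProfile_nonneg _ _ _)]

lemma exists_toIcoMod_sub_pi (t : ℝ) : ∃ y ∈ Icc 0 π,
    (toIcoMod two_pi_pos 0 t = y ∧ toIcoMod two_pi_pos 0 (t - π) = y + π) ∨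
    (toIcoMod two_pi_pos 0 t = y + π ∧ toIcoMod two_pi_pos 0 (t - π) = y) := by
  obtain ⟨hx0, hx⟩ := toIcoMod_mem_Ico' two_pi_pos t
  rcases le_or_gt π (toIcoMod two_pi_pos 0 t) with h | h
  · exact ⟨_, ⟨by linarith, by linarith⟩, .inr ⟨by ring, toIcoMod_sub_of_le two_pi_pos pi_pos.le h⟩⟩
  · refine ⟨_, ⟨hx0, h.le⟩, .inl ⟨rfl, ?_⟩⟩
    rw [toIcoMod_sub_of_lt two_pi_pos (by linarith [pi_pos]) h]
    ring

lemma hTrap_antipodal (hγ : 0 ≤ γ) (hd : 0 ≤ d) (hd2 : d ≤ π / 2) :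
    hTrap γ d (2 * π - 2 * d) 0 ⊔ hTrap γ d (2 * π - 2 * d) π = (fun _ => γ * d) ∧
    hTrap γ d (2 * π - 2 * d) 0 ⊓ hTrap γ d (2 * π - 2 * d) π =
      hTrap γ d (π - 2 * d) 0 ⊔ hTrap γ d (π - 2 * d) π ∧
    hTrap γ d (π - 2 * d) 0 ⊓ hTrap γ d (π - 2 * d) π = (fun _ => 0) := by
  simp only [funext_iff, Pi.sup_apply, Pi.inf_apply, hTrap_apply hγ, sub_zero,
    ← mul_max_of_nonneg _ _ hγ, ← mul_min_of_nonneg _ _ hγ, ← forall_and]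
  intro t
  obtain ⟨y, hy, ⟨hx, hx'⟩ | ⟨hx, hx'⟩⟩ := exists_toIcoMod_sub_pi t <;>
    obtain ⟨h₁, h₂, h₃⟩ := trapProfile_antipodal hd hd2 hy <;>
    rw [hx, hx']
  · rw [h₁, h₂, h₃, mul_zero]; exact ⟨rfl, rfl, rfl⟩
  · rw [max_comm (trapProfile d _ (y + π)), min_comm (trapProfile d _ (y + π)),
      max_comm (trapProfile d (π - 2 * d) (y + π)), min_comm (trapProfile d (π - 2 * d) (y + π)),
      h₁, h₂, h₃, mul_zero]
    exact ⟨rfl, rfl, rfl⟩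

lemma deriv_hTrap (hγ : 0 ≤ γ) (hd : 0 ≤ d) (hℓ : 0 ≤ ℓ) (ht : t ∈ Ioo 0 (2 * π))
    (h₁ : t ≠ d) (h₂ : t ≠ d + ℓ) (h₃ : t ≠ 2 * d + ℓ) :
    deriv (hTrap γ d ℓ 0) t = γ * trapSlope d ℓ t := by
  have heq : hTrap γ d ℓ 0 =ᶠ[𝓝 t] fun s => γ * trapProfile d ℓ s := by
    filter_upwards [Ioo_mem_nhds ht.1 ht.2] with s hs
    rw [hTrap_apply hγ, sub_zero, (toIcoMod_eq_self two_pi_pos).2 ⟨hs.1.le, by simpa using hs.2⟩]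
  exact (((hasDerivAt_trapProfile hd hℓ ht.1 h₁ h₂ h₃).const_mul γ).congr_of_eventuallyEq
    heq).deriv

lemma tendsto_deriv_hTrap (hγ : 0 ≤ γ) (hd : 0 ≤ d) (hℓ : 0 ≤ ℓ) {L : ℕ → ℝ}
    (hL : Tendsto L atTop (𝓝 ℓ)) (hL0 : ∀ k, 0 ≤ L k) (ht : t ∈ Ioo 0 (2 * π))
    (h₁ : t ≠ d) (h₂ : t ≠ d + ℓ) (h₃ : t ≠ 2 * d + ℓ) :
    Tendsto (fun k => deriv (hTrap γ d (L k) 0) t) atTop (𝓝 (deriv (hTrap γ d ℓ 0) t)) := by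
  have hbreak : ∀ {c : ℝ}, t ≠ c + ℓ →
      ∀ᶠ k in atTop, t ≠ c + L k ∧ (t < c + L k ↔ t < c + ℓ) := fun h =>
    (((continuous_const_add _).tendsto ℓ).comp hL).eventually (eventually_ne_and_lt_iff h)
  refine tendsto_const_nhds.congr' ?_
  filter_upwards [hbreak h₂, hbreak h₃] with k ⟨h₂', e₂⟩ ⟨h₃', e₃⟩
  rw [deriv_hTrap hγ hd hℓ ht h₁ h₂ h₃, deriv_hTrap hγ hd (hL0 k) ht h₁ h₂' h₃']
  simp only [trapSlope, e₂, e₃]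

lemma abs_hTrap_sub_le (hγ : 0 ≤ γ) (ℓ' t : ℝ) :
    |hTrap γ d ℓ' t₀ t - hTrap γ d ℓ t₀ t| ≤ γ * |ℓ' - ℓ| := by
  rw [hTrap_apply hγ, hTrap_apply hγ, ← mul_sub, abs_mul, abs_of_nonneg hγ]
  exact mul_le_mul_of_nonneg_left (abs_trapProfile_sub_le _ _ _ _) hγ

lemma tendstoUniformly_hTrap (hγ : 0 ≤ γ) {L : ℕ → ℝ} (hL : Tendsto L atTop (𝓝 ℓ)) :
    TendstoUniformly (fun k => hTrap γ d (L k) t₀) (hTrap γ d ℓ t₀) atTop := by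
  have h0 : Tendsto (fun k => γ * |L k - ℓ|) atTop (𝓝 0) := by
    simpa using (hL.sub_const ℓ).abs.const_mul γ
  refine Metric.tendstoUniformly_iff.2 fun ε hε => ?_
  filter_upwards [h0.eventually (gt_mem_nhds hε)] with k hk t
  rw [Real.dist_eq, abs_sub_comm]
  exact (abs_hTrap_sub_le hγ _ t).trans_lt hk

lemma tauTendstoC_hTrap (hγ : 0 ≤ γ) (hd : 0 ≤ d) (hℓ : 0 ≤ ℓ) {L : ℕ → ℝ}
    (hL : Tendsto L atTop (𝓝 ℓ)) (hL0 : ∀ k, 0 ≤ L k) (hLsum : ∀ k, 2 * d + L k ≤ 2 * π) :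
    TauTendstoC (fun k => hTrap γ d (L k) 0) (hTrap γ d ℓ 0) := by
  refine ⟨tendstoUniformly_hTrap hγ hL, ⟨γ, fun k => .of_forall fun t => ?_⟩, ?_⟩
  · simpa [Real.coe_toNNReal _ hγ] using
      norm_deriv_le_of_lipschitz (lipschitzWith_hTrap hγ (hLsum k)) (x₀ := t)
  · rw [ae_restrict_iff' measurableSet_Ioc]
    have hnull : volume ({d, d + ℓ, 2 * d + ℓ, 2 * π} : Set ℝ) = 0 :=
      (toFinite _).measure_zero _
    filter_upwards [measure_eq_zero_iff_ae_notMem.1 hnull] with t ht ⟨ht0, ht2⟩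
    simp only [mem_insert_iff, mem_singleton_iff, not_or] at ht
    exact tendsto_deriv_hTrap hγ hd hℓ hL hL0 ⟨ht0, ht2.lt_of_ne ht.2.2.2⟩ ht.1 ht.2.1 ht.2.2.1

end Trapezoid

section Functional
variable {W : (ℝ → ℝ) → ℝ} {γ d ℓ t₀ : ℝ}

lemma RotInvC.apply_hTrap (hrot : RotInvC W) (hγ : 0 ≤ γ) (hsum : 2 * d + ℓ ≤ 2 * π) :
    W (hTrap γ d ℓ t₀) = W (hTrap γ d ℓ 0) := by
  rw [hTrap_eq_comp_add γ d ℓ t₀]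
  exact hrot _ _ (lipC_hTrap hγ hsum)

lemma IsValC.hTrap_plateau_add (hval : IsValC W) (hrot : RotInvC W) (hγ : 0 ≤ γ) (hd : 0 ≤ d)
    {a b : ℝ} (ha : 0 ≤ a) (hb : 0 ≤ b) (hab : 2 * d + a + b ≤ 2 * π) :
    W (hTrap γ d a 0) + W (hTrap γ d b 0) = W (hTrap γ d (a + b) 0) + W (hTrap γ d 0 0) := by
  have h := hval _ _ (lipC_hTrap (d := d) (ℓ := a) (t₀ := 0) hγ (by linarith))
    (lipC_hTrap (d := d) (ℓ := b) (t₀ := a) hγ (by linarith))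
  rw [hTrap_sup_hTrap hγ hd ha hb hab, hTrap_inf_hTrap hγ hd ha hb hab,
    hrot.apply_hTrap (ℓ := b) (t₀ := a) hγ (by linarith),
    hrot.apply_hTrap (ℓ := 0) (t₀ := a) hγ (by linarith)] at h
  linarith

lemma IsValC.hTrap_plateau_pi (hval : IsValC W) (hrot : RotInvC W)
    (hconst : ∀ lam : ℝ, W (fun _ => lam) = 0) (hγ : 0 ≤ γ) (hd : 0 ≤ d) (hd2 : d ≤ π / 2) :
    W (hTrap γ d π 0) = W (hTrap γ d 0 0) := by
  have hπ := pi_pos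
  obtain ⟨hsup, hinf, hinf'⟩ := hTrap_antipodal hγ hd hd2
  have hN := hval _ _ (lipC_hTrap (d := d) (ℓ := 2 * π - 2 * d) (t₀ := 0) hγ (by linarith))
    (lipC_hTrap (d := d) (ℓ := 2 * π - 2 * d) (t₀ := π) hγ (by linarith))
  have hB := hval _ _ (lipC_hTrap (d := d) (ℓ := π - 2 * d) (t₀ := 0) hγ (by linarith))
    (lipC_hTrap (d := d) (ℓ := π - 2 * d) (t₀ := π) hγ (by linarith))
  rw [hsup, hinf, hconst, hrot.apply_hTrap (t₀ := π) hγ (by linarith)] at hN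
  rw [hinf', hconst, hrot.apply_hTrap (t₀ := π) hγ (by linarith)] at hB
  have hadd := hval.hTrap_plateau_add hrot hγ hd (a := π - 2 * d) (b := π) (by linarith) hπ.le
    (by linarith)
  rw [show π - 2 * d + π = 2 * π - 2 * d by ring] at hadd
  linarith

lemma IsValC.hTrap_plateau_pi_div_two_pow (hval : IsValC W) (hrot : RotInvC W)
    (hconst : ∀ lam : ℝ, W (fun _ => lam) = 0) (hγ : 0 ≤ γ) (hd : 0 ≤ d) (hd2 : d ≤ π / 2)
    (m : ℕ) : W (hTrap γ d (π / 2 ^ m) 0) = W (hTrap γ d 0 0) := by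
  induction m with
  | zero => simpa using hval.hTrap_plateau_pi hrot hconst hγ hd hd2
  | succ m ih =>
    have hhalf : π / 2 ^ (m + 1) + π / 2 ^ (m + 1) = π / 2 ^ m := by
      rw [pow_succ]; field_simp; ring
    have hle : π / 2 ^ m ≤ π := div_le_self pi_pos.le (one_le_pow₀ one_le_two)
    have hadd := hval.hTrap_plateau_add hrot hγ hd (a := π / 2 ^ (m + 1))
      (b := π / 2 ^ (m + 1)) (by positivity) (by positivity) (by linarith)
    rw [hhalf, ih] at hadd
    linarith

lemma IsValC.hTrap_plateau_dyadic (hval : IsValC W) (hrot : RotInvC W)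
    (hconst : ∀ lam : ℝ, W (fun _ => lam) = 0) (hγ : 0 ≤ γ) (hd : 0 ≤ d) (hd2 : d ≤ π / 2)
    (m n : ℕ) (hn : n * π / 2 ^ m ≤ 2 * π - 2 * d) :
    W (hTrap γ d (n * π / 2 ^ m) 0) = W (hTrap γ d 0 0) := by
  induction n with
  | zero => simp
  | succ n ih =>
    have hstep : (n + 1 : ℕ) * π / 2 ^ m = n * π / 2 ^ m + π / 2 ^ m := by push_cast; ring
    rw [hstep] at hn ⊢
    have hadd := hval.hTrap_plateau_add hrot hγ hd (a := n * π / 2 ^ m) (b := π / 2 ^ m)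
      (by positivity) (by positivity) (by linarith)
    rw [ih (by linarith [show 0 ≤ π / 2 ^ m by positivity]),
      hval.hTrap_plateau_pi_div_two_pow hrot hconst hγ hd hd2] at hadd
    linarith

lemma TauContC.tendsto_hTrap (hτ : TauContC W) (hγ : 0 ≤ γ) (hd : 0 ≤ d) (hℓ : 0 ≤ ℓ)
    (hsum : 2 * d + ℓ ≤ 2 * π) {L : ℕ → ℝ} (hL : Tendsto L atTop (𝓝 ℓ))
    (hL0 : ∀ k, 0 ≤ L k) (hLsum : ∀ k, 2 * d + L k ≤ 2 * π) :
    Tendsto (fun k => W (hTrap γ d (L k) 0)) atTop (𝓝 (W (hTrap γ d ℓ 0))) :=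
  hτ _ _ (fun k => lipC_hTrap hγ (hLsum k)) (lipC_hTrap hγ hsum)
    (tauTendstoC_hTrap hγ hd hℓ hL hL0 hLsum)

end Functional

section DyadicApproximation
variable {ℓ : ℝ}

lemma tendsto_nat_floor_mul_pi_div_two_pow (hℓ : 0 ≤ ℓ) :
    Tendsto (fun k : ℕ => ⌊ℓ * (2 ^ k / π)⌋₊ * π / 2 ^ k) atTop (𝓝 ℓ) := by
  have hx : Tendsto (fun k : ℕ => (2 : ℝ) ^ k / π) atTop atTop :=
    (tendsto_pow_atTop_atTop_of_one_lt one_lt_two).atTop_div_const pi_pos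
  convert (tendsto_nat_floor_mul_div_atTop hℓ).comp hx using 2 with k
  simp [div_div_eq_mul_div]

lemma nat_floor_mul_pi_div_two_pow_le (hℓ : 0 ≤ ℓ) (k : ℕ) :
    ⌊ℓ * (2 ^ k / π)⌋₊ * π / 2 ^ k ≤ ℓ := by
  rw [div_le_iff₀ (by positivity)]
  calc ⌊ℓ * (2 ^ k / π)⌋₊ * π ≤ ℓ * (2 ^ k / π) * π := by
        gcongr; exact Nat.floor_le (by positivity)
    _ = ℓ * 2 ^ k := by field_simp

end DyadicApproximation

theorem valuation_trapezoid_independent_of_plateau_general (W : (ℝ → ℝ) → ℝ)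
    (hval : IsValC W) (hτ : TauContC W) (hrot : RotInvC W)
    (hconst : ∀ lam : ℝ, W (fun _ => lam) = 0)
    (γ d ℓ t₀ : ℝ) (hγ : 0 ≤ γ) (hd : 0 < d) (hd2 : d ≤ Real.pi / 2)
    (hℓ0 : 0 ≤ ℓ) (hℓ : ℓ ≤ 2 * (Real.pi - d)) :
    W (hTrap γ d ℓ t₀) = W (hTrap γ d 0 0) := by
  have hsum : 2 * d + ℓ ≤ 2 * π := by linarith
  rw [hrot.apply_hTrap hγ hsum]
  set L : ℕ → ℝ := fun k => ⌊ℓ * (2 ^ k / π)⌋₊ * π / 2 ^ k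
  have hLle : ∀ k, L k ≤ ℓ := nat_floor_mul_pi_div_two_pow_le hℓ0
  have hdyadic : ∀ k, W (hTrap γ d (L k) 0) = W (hTrap γ d 0 0) := fun k =>
    hval.hTrap_plateau_dyadic hrot hconst hγ hd.le hd2 k _ (by linarith [hLle k])
  have hlim := hτ.tendsto_hTrap hγ hd.le hℓ0 hsum (tendsto_nat_floor_mul_pi_div_two_pow hℓ0)
    (fun k => by positivity) (fun k => by linarith [hLle k])
  exact tendsto_nhds_unique (hlim.congr hdyadic) tendsto_const_nhds

/-- a τ-continuous rotation-invariant valuation `W` on `Lip(S¹)` that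
vanishes on constants does not see the plateau length `ℓ` nor the position `t₀` of the
trapezoidal functions: `W(h_{γ,d,ℓ,t₀}) = W(h_{γ,d,0,0})`. -/
theorem valuation_trapezoid_independent_of_plateau (W : (ℝ → ℝ) → ℝ)
    (hval : IsValC W) (hτ : TauContC W) (hrot : RotInvC W)
    (hconst : ∀ lam : ℝ, W (fun _ => lam) = 0)
    (γ d ℓ t₀ : ℝ) (hγ : 0 ≤ γ) (hd : 0 < d) (hd2 : d ≤ Real.pi / 2)
    (hℓ0 : 0 ≤ ℓ) (hℓ : ℓ ≤ 2 * (Real.pi - d)) (ht₀ : t₀ ∈ Set.Icc 0 (2 * Real.pi)) :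
    W (hTrap γ d ℓ t₀) = W (hTrap γ d 0 0) :=
  valuation_trapezoid_independent_of_plateau_general W hval hτ hrot hconst γ d ℓ t₀ hγ hd hd2 hℓ0 hℓ
end
end

section
/- Let V: Lip(S¹) → ℝ be a τ-continuous rotation-invariant valuation vanishing on constants, let g ∈ 𝓛(S¹) be piecewise linear and symmetric with respect to π, and for (a,b] ⊂ [0,π] set ν_g((a,b]) = V(g_{ab}), where g_{ab} equals g(a) on [0,a] ∪ (2π−a,2π], g on (a,b] ∪ (2π−b,2π−a], and g(b) on (b,2π−b]. Then ν_g is well-defined and finitely additive on the algebra generated by the semi-open subintervals of [0,π]: in particular ν_g((a,b]) + ν_g((b,c]) = ν_g((a,c]) for a ≤ b ≤ c. -/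
open MeasureTheory Set Filter Topology Classical
open scoped ENNReal NNReal

noncomputable section

/-- Reduction of `t ∈ ℝ` modulo `2π` into `[0, 2π)`. -/
noncomputable def circReduce (t : ℝ) : ℝ := 2 * Real.pi * Int.fract (t / (2 * Real.pi))

/-- For `g` symmetric with respect to `π`, the function `g_{ab}` equal to `g(a)` on
`[0,a] ∪ (2π−a,2π]`, to `g` on `(a,b] ∪ (2π−b,2π−a]`, and to `g(b)` on `(b,2π−b]`. -/
noncomputable def gab (g : ℝ → ℝ) (a b : ℝ) (t : ℝ) : ℝ :=
  g (max a (min b (min (circReduce t) (2 * Real.pi - circReduce t))))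

/-- `f` is piecewise linear on `[0, 2π]`. -/
def IsPWLinear (f : ℝ → ℝ) : Prop :=
  ∃ (N : ℕ) (p : Fin (N + 1) → ℝ), StrictMono p ∧ p 0 = 0 ∧
    p (Fin.last N) = 2 * Real.pi ∧
    ∀ i : Fin N, ∃ α β : ℝ, ∀ t ∈ Set.Icc (p i.castSucc) (p i.succ), f t = α * t + β

/-- `s` is a finite union of semi-open subintervals of `[0, π]` (the members of the
algebra generated by the semi-open intervals of `[0, π]`). -/
def IsIocUnion (s : Set ℝ) : Prop :=
  ∃ F : Finset (ℝ × ℝ), (∀ q ∈ F, 0 ≤ q.1 ∧ q.1 ≤ q.2 ∧ q.2 ≤ Real.pi) ∧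
    s = ⋃ q ∈ F, Set.Ioc q.1 q.2

/-!
Writing `f ∨ g` and `f ∧ g` for the pointwise maximum and minimum, for `a ≤ b ≤ c`, the
functions `g_{ab} ∨ g_{bc}` and `g_{ac} ∨ g(b)` agree, and so do `g_{ab} ∧ g_{bc}` and
`g_{ac} ∧ g(b)`. The valuation property, together with `V(g(b)) = 0`, then gives
`V(g_{ab}) + V(g_{bc}) = V(g_{ac})`. Hence `ν_g((a,b]) = F(b) - F(a)` with `F(x) = V(g_{0x})`.

A set in the algebra is determined by its indicator, a finite linear combination of the linearly
independent steps `1_{(x,∞)}`. Sending `1_{(x,∞)}` to `-F(x)` and extending linearly defines `ν`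
consistently, and finite additivity is linearity, since the indicator of a disjoint union is the
sum of the indicators.
-/

lemma min_circReduce_eq_norm (t : ℝ) :
    min (circReduce t) (2 * Real.pi - circReduce t) = ‖(t : AddCircle (2 * Real.pi))‖ := by
  have h2π : (0 : ℝ) < 2 * Real.pi := by positivity
  rw [AddCircle.norm_eq' _ h2π, ← div_eq_inv_mul, abs_sub_round_eq_min, circReduce,
    mul_min_of_nonneg _ _ h2π.le, mul_sub, mul_one]

lemma lipschitzWith_norm_coe_addCircle (p : ℝ) :
    LipschitzWith 1 (fun t : ℝ => ‖(t : AddCircle p)‖) :=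
  LipschitzWith.of_dist_le_mul fun s t => by
    simpa [Real.dist_eq, ← AddCircle.coe_sub] using
      (abs_norm_sub_norm_le (s : AddCircle p) t).trans
        (QuotientAddGroup.norm_mk_le_norm (m := s - t))

lemma gab_eq (g : ℝ → ℝ) (a b : ℝ) :
    gab g a b = fun t : ℝ => g (max a (min b ‖(t : AddCircle (2 * Real.pi))‖)) := by
  funext t; rw [gab, min_circReduce_eq_norm]

lemma LipC.gab {g : ℝ → ℝ} (hg : LipC g) (a b : ℝ) : LipC (gab g a b) := by
  obtain ⟨-, L, hL⟩ := hg
  rw [gab_eq]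
  refine ⟨fun t => by simp only [AddCircle.coe_add_period], L, ?_⟩
  exact mul_one L ▸ hL.comp (((lipschitzWith_norm_coe_addCircle _).const_min b).const_max a)

lemma clamp_pair {α : Type*} [LinearOrder α] {a b c : α} (hab : a ≤ b) (hbc : b ≤ c)
    (m : α) :
    (max a (min b m) = max a (min c m) ∧ max b (min c m) = b) ∨
      (max a (min b m) = b ∧ max b (min c m) = max a (min c m)) := by
  rcases le_total m b with h | h
  · left
    constructor
    · rw [min_eq_right h, min_eq_right (h.trans hbc)]
    · exact max_eq_left ((min_le_right _ _).trans h)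
  · right
    constructor
    · rw [min_eq_left h, max_eq_right hab]
    · rw [max_eq_right (le_min hbc h), max_eq_right (hab.trans (le_min hbc h))]

lemma gab_sup_gab (g : ℝ → ℝ) {a b c : ℝ} (hab : a ≤ b) (hbc : b ≤ c) :
    gab g a b ⊔ gab g b c = gab g a c ⊔ fun _ => g b := by
  funext t
  rcases clamp_pair hab hbc (min (circReduce t) (2 * Real.pi - circReduce t)) with
    ⟨h₁, h₂⟩ | ⟨h₁, h₂⟩ <;> simp only [Pi.sup_apply, gab, h₁, h₂, max_comm]

lemma gab_inf_gab (g : ℝ → ℝ) {a b c : ℝ} (hab : a ≤ b) (hbc : b ≤ c) :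
    gab g a b ⊓ gab g b c = gab g a c ⊓ fun _ => g b := by
  funext t
  rcases clamp_pair hab hbc (min (circReduce t) (2 * Real.pi - circReduce t)) with
    ⟨h₁, h₂⟩ | ⟨h₁, h₂⟩ <;> simp only [Pi.inf_apply, gab, h₁, h₂, min_comm]

lemma LipC.const (c : ℝ) : LipC fun _ => c :=
  ⟨fun _ => rfl, 0, LipschitzWith.const' c⟩

theorem IsValC.gab_add_gab {V : (ℝ → ℝ) → ℝ} (hval : IsValC V)
    (hconst : ∀ lam : ℝ, V (fun _ => lam) = 0) {g : ℝ → ℝ} (hg : LipC g) {a b c : ℝ}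
    (hab : a ≤ b) (hbc : b ≤ c) : V (gab g a b) + V (gab g b c) = V (gab g a c) := by
  rw [← hval _ _ (hg.gab a b) (hg.gab b c), gab_sup_gab g hab hbc, gab_inf_gab g hab hbc,
    hval _ _ (hg.gab a c) (LipC.const _), hconst, add_zero]

def heaviside (x : ℝ) : ℝ → ℝ := (Ioi x).indicator 1

lemma heaviside_mul_heaviside (x y : ℝ) : heaviside x * heaviside y = heaviside (max x y) := by
  rw [heaviside, heaviside, ← inter_indicator_one, Ioi_inter_Ioi, heaviside]

lemma indicator_Ioc_eq_heaviside_sub (a b : ℝ) :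
    (Ioc a b).indicator 1 = heaviside a - heaviside (max a b) := by
  funext t
  by_cases ha : a < t <;> by_cases hb : b < t <;> simp [heaviside, ha, hb, not_lt.1]

theorem linearIndependent_heaviside : LinearIndependent ℝ heaviside := by
  rw [linearIndependent_iff']
  intro s
  induction s using Finset.induction_on_max with
  | empty => simp
  | insert a s hlt ih =>
    intro c hc
    rw [Finset.sum_insert fun h => lt_irrefl a (hlt a h)] at hc
    have hright (t : ℝ) (ht : a ≤ t) : c a * heaviside a t + ∑ i ∈ s, c i = 0 := by
      have hs : ∀ i ∈ s, c i * heaviside i t = c i := fun i hi => by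
        simp [heaviside, (hlt i hi).trans_le ht]
      simpa [Finset.sum_congr rfl hs] using congrFun hc t
    have hca : c a = 0 := by
      simpa [heaviside] using (hright (a + 1) (by linarith)).trans (hright a le_rfl).symm
    rw [hca, zero_smul, zero_add] at hc
    intro i hi
    rcases Finset.mem_insert.1 hi with rfl | hi
    · exact hca
    · exact ih c hc i hi

abbrev stepSpan : Submodule ℝ (ℝ → ℝ) := Submodule.span ℝ (range heaviside)

lemma heaviside_mem_stepSpan (x : ℝ) : heaviside x ∈ stepSpan :=
  Submodule.subset_span (mem_range_self x)

lemma mul_mem_stepSpan {f g : ℝ → ℝ} (hf : f ∈ stepSpan) (hg : g ∈ stepSpan) :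
    f * g ∈ stepSpan := by
  have hmul : stepSpan * stepSpan ≤ stepSpan := by
    rw [Submodule.span_mul_span]
    refine Submodule.span_mono ?_
    rintro _ ⟨_, ⟨x, rfl⟩, _, ⟨y, rfl⟩, rfl⟩
    exact ⟨max x y, (heaviside_mul_heaviside x y).symm⟩
  exact hmul (Submodule.mul_mem_mul hf hg)

lemma indicator_Ioc_mem_stepSpan (a b : ℝ) : (Ioc a b).indicator 1 ∈ stepSpan := by
  rw [indicator_Ioc_eq_heaviside_sub]
  exact sub_mem (heaviside_mem_stepSpan a) (heaviside_mem_stepSpan _)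

lemma indicator_union_mem_stepSpan {s t : Set ℝ} (hs : s.indicator 1 ∈ stepSpan)
    (ht : t.indicator 1 ∈ stepSpan) : (s ∪ t).indicator 1 ∈ stepSpan := by
  have h := indicator_union_add_inter (1 : ℝ → ℝ) s t
  rw [inter_indicator_one, ← eq_sub_iff_add_eq] at h
  rw [h]
  exact sub_mem (add_mem hs ht) (mul_mem_stepSpan hs ht)

lemma IsIocUnion.indicator_mem_stepSpan {s : Set ℝ} (hs : IsIocUnion s) :
    s.indicator 1 ∈ stepSpan := by
  obtain ⟨F, -, rfl⟩ := hs
  induction F using Finset.induction_on with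
  | empty =>
    simp only [Finset.notMem_empty, iUnion_of_empty, iUnion_empty, indicator_empty]
    exact zero_mem _
  | insert q F _ ih =>
    rw [Finset.set_biUnion_insert]
    exact indicator_union_mem_stepSpan (indicator_Ioc_mem_stepSpan q.1 q.2) ih

def stepFunctional (w : ℝ → ℝ) : stepSpan →ₗ[ℝ] ℝ :=
  (Module.Basis.span linearIndependent_heaviside).constr ℝ w

lemma stepFunctional_heaviside (w : ℝ → ℝ) (x : ℝ) :
    stepFunctional w ⟨heaviside x, heaviside_mem_stepSpan x⟩ = w x := by
  rw [stepFunctional, ← Module.Basis.span_apply linearIndependent_heaviside,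
    Module.Basis.constr_basis]

/-- The set function with `ν (Ioc a b) = F b - F a`; junk `0` on sets whose indicator is not a
finite combination of steps. -/
def stepMeasure (F : ℝ → ℝ) (s : Set ℝ) : ℝ :=
  if h : s.indicator 1 ∈ stepSpan then stepFunctional (-F) ⟨_, h⟩ else 0

lemma stepMeasure_of_mem (F : ℝ → ℝ) {s : Set ℝ} (h : s.indicator 1 ∈ stepSpan) :
    stepMeasure F s = stepFunctional (-F) ⟨_, h⟩ :=
  dif_pos h

lemma stepMeasure_empty (F : ℝ → ℝ) : stepMeasure F ∅ = 0 := by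
  have h₀ : (∅ : Set ℝ).indicator 1 ∈ stepSpan := by rw [indicator_empty]; exact zero_mem _
  have h : (⟨_, h₀⟩ : stepSpan) = 0 := Subtype.ext (indicator_empty 1)
  rw [stepMeasure_of_mem F h₀, h, map_zero]

lemma stepMeasure_Ioc (F : ℝ → ℝ) {a b : ℝ} (hab : a ≤ b) :
    stepMeasure F (Ioc a b) = F b - F a := by
  have h : (⟨_, indicator_Ioc_mem_stepSpan a b⟩ : stepSpan) =
      ⟨heaviside a, heaviside_mem_stepSpan a⟩ - ⟨heaviside b, heaviside_mem_stepSpan b⟩ := by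
    ext1; simp [indicator_Ioc_eq_heaviside_sub, max_eq_right hab]
  rw [stepMeasure_of_mem F (indicator_Ioc_mem_stepSpan a b), h, map_sub,
    stepFunctional_heaviside, stepFunctional_heaviside, Pi.neg_apply, Pi.neg_apply, neg_sub_neg]

lemma stepMeasure_union (F : ℝ → ℝ) {s t : Set ℝ} (hs : s.indicator 1 ∈ stepSpan)
    (ht : t.indicator 1 ∈ stepSpan) (hst : Disjoint s t) :
    stepMeasure F (s ∪ t) = stepMeasure F s + stepMeasure F t := by
  have h : (⟨_, indicator_union_mem_stepSpan hs ht⟩ : stepSpan) = ⟨_, hs⟩ + ⟨_, ht⟩ := by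
    ext1; exact indicator_union_of_disjoint hst 1
  rw [stepMeasure_of_mem F (indicator_union_mem_stepSpan hs ht), h, map_add,
    stepMeasure_of_mem F hs, stepMeasure_of_mem F ht]

theorem nu_g_well_defined_and_additive_general (V : (ℝ → ℝ) → ℝ)
    (hval : IsValC V)
    (hconst : ∀ lam : ℝ, V (fun _ => lam) = 0)
    (g : ℝ → ℝ) (hg : LipC g) :
    (∀ a b c : ℝ, 0 ≤ a → a ≤ b → b ≤ c → c ≤ Real.pi →
      V (gab g a b) + V (gab g b c) = V (gab g a c)) ∧
    ∃ ν : Set ℝ → ℝ, ν ∅ = 0 ∧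
      (∀ a b : ℝ, 0 ≤ a → a ≤ b → b ≤ Real.pi → ν (Set.Ioc a b) = V (gab g a b)) ∧
      (∀ s t : Set ℝ, IsIocUnion s → IsIocUnion t → Disjoint s t →
        ν (s ∪ t) = ν s + ν t) := by
  refine ⟨fun a b c _ hab hbc _ => hval.gab_add_gab hconst hg hab hbc,
    stepMeasure fun x => V (gab g 0 x), stepMeasure_empty _, fun a b ha hab _ => ?_,
    fun s t hs ht => stepMeasure_union _ hs.indicator_mem_stepSpan ht.indicator_mem_stepSpan⟩
  rw [stepMeasure_Ioc _ hab, ← hval.gab_add_gab hconst hg ha hab, add_sub_cancel_left]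

/-- for a τ-continuous rotation-invariant valuation `V` vanishing on
constants and a piecewise linear `g` symmetric with respect to `π`, the set function
`ν_g((a,b]) = V(g_{ab})` is well-defined and finitely additive on the algebra generated
by the semi-open subintervals of `[0,π]`; in particular
`ν_g((a,b]) + ν_g((b,c]) = ν_g((a,c])`. -/
theorem nu_g_well_defined_and_additive (V : (ℝ → ℝ) → ℝ)
    (hval : IsValC V) (hτ : TauContC V) (hrot : RotInvC V)
    (hconst : ∀ lam : ℝ, V (fun _ => lam) = 0)
    (g : ℝ → ℝ) (hg : LipC g) (hpl : IsPWLinear g)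
    (hsym : ∀ t, g t = g (2 * Real.pi - t)) :
    (∀ a b c : ℝ, 0 ≤ a → a ≤ b → b ≤ c → c ≤ Real.pi →
      V (gab g a b) + V (gab g b c) = V (gab g a c)) ∧
    ∃ ν : Set ℝ → ℝ, ν ∅ = 0 ∧
      (∀ a b : ℝ, 0 ≤ a → a ≤ b → b ≤ Real.pi → ν (Set.Ioc a b) = V (gab g a b)) ∧
      (∀ s t : Set ℝ, IsIocUnion s → IsIocUnion t → Disjoint s t →
        ν (s ∪ t) = ν s + ν t) :=
  nu_g_well_defined_and_additive_general V hval hconst g hg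
end
end

section
/- Define V: Lip(S¹) → ℝ by V(f) = ∫₀^{2π} |f'(t)| · χ_{[1,∞)}(f(t)) dH¹(t). Then V is a rotation-invariant τ-continuous valuation on Lip(S¹), but V is not uniformly τ-continuous: there exist sequences f_m, g_m with uniformly bounded Lipschitz norm and d_τ(f_m, g_m) → 0 while V(f_m) = H¹([0,2π]) and V(g_m) = 0 for all m. -/
open MeasureTheory Set Filter Topology Classical
open scoped ENNReal NNReal

noncomputable section

/-- The valuation `V(f) = ∫₀^{2π} |f'(t)|·χ_{[1,∞)}(f(t)) dH¹(t)`. -/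
noncomputable def Vex (f : ℝ → ℝ) : ℝ :=
  ∫ t in (0 : ℝ)..(2 * Real.pi),
    |deriv f t| * Set.indicator (Set.Ici (1 : ℝ)) (fun _ => (1 : ℝ)) (f t)

/-- The metric `d_τ(f,g) = ‖f − g‖_∞ + ∫₀^{2π} |f' − g'| dH¹`. -/
noncomputable def dTauC (f g : ℝ → ℝ) : ℝ :=
  (⨆ t : Set.Icc (0 : ℝ) (2 * Real.pi), |f t - g t|) +
    ∫ t in (0 : ℝ)..(2 * Real.pi), |deriv f t - deriv g t|

/-- `‖f‖ = max (‖f‖_∞, L(f)) ≤ M`. -/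
def NormBoundC (M : ℝ) (f : ℝ → ℝ) : Prop :=
  (∀ t, |f t| ≤ M) ∧ LipschitzWith (Real.toNNReal M) f

/-- Uniform τ-continuity of a functional on `Lip(S¹)`. -/
def UnifTauContC (V : (ℝ → ℝ) → ℝ) : Prop :=
  ∀ ε : ℝ, 0 < ε → ∀ M : ℝ, 0 < M → ∃ δ : ℝ, 0 < δ ∧
    ∀ f g : ℝ → ℝ, LipC f → LipC g → NormBoundC M f → NormBoundC M g →
      dTauC f g < δ → |V f - V g| < ε

/-!
The integrand of `Vex` depends only on `(f t, f' t)`. At almost every `t` the pair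
`(f ⊔ g, f ⊓ g)` has the same values and derivatives as `(f, g)` or `(g, f)`: off the contact
set `{f = g}` this is local, and on it a differentiable function touching another from above
has the same derivative. This gives the valuation property; rotation invariance is the
periodicity of the integrand. For τ-continuity, dominated convergence applies because `f'`
vanishes a.e. on the level set `{f = 1}`, so the jump of the indicator only matters where the
limit integrand is zero anyway.

For the failure of uniform continuity, let `w_m` be a cosine wave of height `π / (m + 1)` with
`m + 1` periods. Then `1 + w_m` and `1 - π / (m + 1) + w_m` have the same derivative and are
`π / (m + 1)` apart, but the first lies above the level `1`, so its `V` is the total variation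
`2π` of `w_m`, while the second lies below it off a countable set, so its `V` is `0`.
-/

open Real Function
open scoped Interval

theorem countable_setOf_isolated_mem {α : Type*} [TopologicalSpace α]
    [SecondCountableTopology α] (s : Set α) :
    {x | x ∈ s ∧ 𝓝[s \ {x}] x = ⊥}.Countable := by
  set T := {x | x ∈ s ∧ 𝓝[s \ {x}] x = ⊥}
  have : DiscreteTopology T := by
    refine discreteTopology_subtype_iff.2 fun x hx => le_bot_iff.1 ?_
    rw [← nhdsWithin_inter', ← hx.2]
    exact nhdsWithin_mono x fun y hy => ⟨hy.2.1, hy.1⟩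
  exact Set.countable_coe_iff.1 (TopologicalSpace.separableSpace_iff_countable.1 inferInstance)

theorem ae_deriv_eq_zero_of_eq {F : Type*} [NormedAddCommGroup F] [NormedSpace ℝ F]
    (h : ℝ → F) (c : F) : ∀ᵐ t, h t = c → deriv h t = 0 := by
  have hnull := (countable_setOf_isolated_mem (h ⁻¹' {c})).measure_zero volume
  filter_upwards [measure_eq_zero_iff_ae_notMem.1 hnull] with t hiso hc
  by_cases hd : DifferentiableAt ℝ h t
  swap
  · exact deriv_zero_of_not_differentiableAt hd
  -- `t` is an accumulation point of the level set, along which the slopes vanish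
  have : (𝓝[h ⁻¹' {c} \ {t}] t).NeBot := ⟨fun hbot => hiso ⟨hc, hbot⟩⟩
  have hslope : Tendsto (slope h t) (𝓝[h ⁻¹' {c} \ {t}] t) (𝓝 (deriv h t)) :=
    (hasDerivAt_iff_tendsto_slope.1 hd.hasDerivAt).mono_left
      (nhdsWithin_mono t fun y hy => hy.2)
  refine tendsto_nhds_unique hslope (tendsto_const_nhds.congr' ?_)
  filter_upwards [self_mem_nhdsWithin] with y hy
  have hyc : h y = c := hy.1
  simp [slope, hyc, hc]

theorem deriv_eq_of_eventuallyLE_of_eq {f g : ℝ → ℝ} {t : ℝ} (hf : DifferentiableAt ℝ f t)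
    (hg : DifferentiableAt ℝ g t) (hle : f ≤ᶠ[𝓝 t] g) (heq : f t = g t) :
    deriv f t = deriv g t := by
  have hmin : IsLocalMin (g - f) t :=
    hle.mono fun s hs => by simpa [heq] using hs
  have := hmin.deriv_eq_zero
  rw [deriv_sub hg hf] at this
  linarith

theorem comp_deriv_sup_add_comp_deriv_inf (F : ℝ → ℝ → ℝ) {f g : ℝ → ℝ} {t : ℝ}
    (hf : DifferentiableAt ℝ f t) (hg : DifferentiableAt ℝ g t)
    (hsup : DifferentiableAt ℝ (f ⊔ g) t) (hinf : DifferentiableAt ℝ (f ⊓ g) t) :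
    F ((f ⊔ g) t) (deriv (f ⊔ g) t) + F ((f ⊓ g) t) (deriv (f ⊓ g) t) =
      F (f t) (deriv f t) + F (g t) (deriv g t) := by
  wlog hle : f t ≤ g t generalizing f g
  · rw [sup_comm, inf_comm, add_comm (F (f t) _)]
    exact this hg hf (by rwa [sup_comm]) (by rwa [inf_comm]) (le_of_not_ge hle)
  rcases hle.lt_or_eq with hlt | heq
  · have hev : ∀ᶠ s in 𝓝 t, f s < g s := hf.continuousAt.eventually_lt hg.continuousAt hlt
    have hsup_eq : f ⊔ g =ᶠ[𝓝 t] g := hev.mono fun s hs => sup_eq_right.2 hs.le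
    have hinf_eq : f ⊓ g =ᶠ[𝓝 t] f := hev.mono fun s hs => inf_eq_left.2 hs.le
    rw [hsup_eq.deriv_eq, hinf_eq.deriv_eq, hsup_eq.eq_of_nhds, hinf_eq.eq_of_nhds, add_comm]
  · have hsup_val : (f ⊔ g) t = g t := by simp [heq]
    have hinf_val : (f ⊓ g) t = f t := by simp [heq]
    have hsup_der : deriv (f ⊔ g) t = deriv g t :=
      (deriv_eq_of_eventuallyLE_of_eq hg hsup (.of_forall fun _ => le_sup_right)
        hsup_val.symm).symm
    have hinf_der : deriv (f ⊓ g) t = deriv f t :=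
      deriv_eq_of_eventuallyLE_of_eq hinf hf (.of_forall fun _ => inf_le_left) hinf_val
    rw [hsup_val, hinf_val, hsup_der, hinf_der, add_comm]

theorem LipC.continuous {f : ℝ → ℝ} (hf : LipC f) : Continuous f :=
  hf.2.choose_spec.continuous

def vexIntegrand (f : ℝ → ℝ) (t : ℝ) : ℝ :=
  |deriv f t| * Set.indicator (Set.Ici (1 : ℝ)) (fun _ => (1 : ℝ)) (f t)

theorem Vex_eq_integral_vexIntegrand (f : ℝ → ℝ) :
    Vex f = ∫ t in (0 : ℝ)..(2 * π), vexIntegrand f t := rfl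

section vexIntegrand

variable {f : ℝ → ℝ} {t : ℝ}

theorem vexIntegrand_of_lt_one (h : f t < 1) : vexIntegrand f t = 0 := by
  simp [vexIntegrand, h]

theorem vexIntegrand_of_one_le (h : 1 ≤ f t) : vexIntegrand f t = |deriv f t| := by
  simp [vexIntegrand, h]

theorem vexIntegrand_nonneg : 0 ≤ vexIntegrand f t :=
  mul_nonneg (abs_nonneg _) (Set.indicator_nonneg (fun _ _ => zero_le_one) _)

theorem vexIntegrand_le_abs_deriv : vexIntegrand f t ≤ |deriv f t| := by
  rcases lt_or_ge (f t) 1 with h | h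
  · simp [vexIntegrand_of_lt_one h]
  · rw [vexIntegrand_of_one_le h]

theorem measurable_vexIntegrand (hf : Measurable f) : Measurable (vexIntegrand f) :=
  (measurable_deriv f).abs.mul ((measurable_const.indicator measurableSet_Ici).comp hf)

theorem Function.Periodic.vexIntegrand {T : ℝ} (hf : Periodic f T) :
    Periodic (vexIntegrand f) T := by
  intro t
  have hderiv : deriv f (t + T) = deriv f t := by
    rw [← deriv_comp_add_const, show (fun s => f (s + T)) = f from funext hf]
  simp only [_root_.vexIntegrand, hderiv, hf t]

theorem LipschitzWith.intervalIntegrable_vexIntegrand {L : ℝ≥0} (hf : LipschitzWith L f)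
    (a b : ℝ) : IntervalIntegrable (vexIntegrand f) volume a b := by
  refine (intervalIntegrable_const (c := (L : ℝ))).mono_fun'
    (measurable_vexIntegrand hf.continuous.measurable).aestronglyMeasurable
    (.of_forall fun t => ?_)
  show ‖vexIntegrand f t‖ ≤ L
  rw [Real.norm_of_nonneg vexIntegrand_nonneg]
  exact vexIntegrand_le_abs_deriv.trans (norm_deriv_le_of_lipschitz hf)

theorem tendsto_vexIntegrand {ι : Type*} {l : Filter ι} {fk : ι → ℝ → ℝ}
    (hval : Tendsto (fun k => fk k t) l (𝓝 (f t)))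
    (hderiv : Tendsto (fun k => deriv (fk k) t) l (𝓝 (deriv f t)))
    (hlevel : f t = 1 → deriv f t = 0) :
    Tendsto (fun k => vexIntegrand (fk k) t) l (𝓝 (vexIntegrand f t)) := by
  rcases lt_trichotomy (f t) 1 with hlt | heq | hgt
  · rw [vexIntegrand_of_lt_one hlt]
    refine tendsto_const_nhds.congr' ?_
    filter_upwards [hval.eventually (eventually_lt_nhds hlt)] with k hk
    exact (vexIntegrand_of_lt_one hk).symm
  · rw [vexIntegrand_of_one_le heq.ge, hlevel heq, abs_zero]
    refine squeeze_zero (fun _ => vexIntegrand_nonneg) (fun _ => vexIntegrand_le_abs_deriv) ?_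
    simpa [hlevel heq] using hderiv.abs
  · rw [vexIntegrand_of_one_le hgt.le]
    refine hderiv.abs.congr' ?_
    filter_upwards [hval.eventually (eventually_gt_nhds hgt)] with k hk
    exact (vexIntegrand_of_one_le hk.le).symm

end vexIntegrand

theorem Vex_isVal : IsValC Vex := by
  rintro f g ⟨-, Lf, hf⟩ ⟨-, Lg, hg⟩
  have hsup : LipschitzWith (max Lf Lg) (f ⊔ g) := hf.max hg
  have hinf : LipschitzWith (max Lf Lg) (f ⊓ g) := hf.min hg
  have hpoint : ∀ᵐ t, vexIntegrand (f ⊔ g) t + vexIntegrand (f ⊓ g) t =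
      vexIntegrand f t + vexIntegrand g t := by
    filter_upwards [hf.ae_differentiableAt, hg.ae_differentiableAt, hsup.ae_differentiableAt,
      hinf.ae_differentiableAt] with t hft hgt hsupt hinft
    exact comp_deriv_sup_add_comp_deriv_inf
      (fun y p => |p| * Set.indicator (Set.Ici (1 : ℝ)) (fun _ => (1 : ℝ)) y)
      hft hgt hsupt hinft
  simp only [Vex_eq_integral_vexIntegrand]
  rw [← intervalIntegral.integral_add (hsup.intervalIntegrable_vexIntegrand _ _)
      (hinf.intervalIntegrable_vexIntegrand _ _),
    ← intervalIntegral.integral_add (hf.intervalIntegrable_vexIntegrand _ _)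
      (hg.intervalIntegrable_vexIntegrand _ _)]
  exact intervalIntegral.integral_congr_ae (hpoint.mono fun t ht _ => ht)

theorem Vex_rotInv : RotInvC Vex := by
  intro c f hf
  have hshift : (fun t => vexIntegrand (fun s => f (s + c)) t) =
      fun t => vexIntegrand f (t + c) := by
    funext t
    simp [vexIntegrand, deriv_comp_add_const]
  rw [Vex_eq_integral_vexIntegrand, hshift, intervalIntegral.integral_comp_add_right,
    zero_add, add_comm (2 * π) c,
    (Function.Periodic.vexIntegrand hf.1).intervalIntegral_add_eq c 0, zero_add]
  rfl

theorem Vex_tauCont : TauContC Vex := by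
  rintro fk f hfk hf ⟨hunif, ⟨C, hC⟩, hderiv⟩
  have hIoc : Ι (0 : ℝ) (2 * π) = Set.Ioc 0 (2 * π) := Set.uIoc_of_le (by positivity)
  simp only [Vex_eq_integral_vexIntegrand]
  refine intervalIntegral.tendsto_integral_filter_of_dominated_convergence (fun _ => C)
    (.of_forall fun k =>
      (measurable_vexIntegrand (hfk k).continuous.measurable).aestronglyMeasurable)
    (.of_forall fun k => ?_) intervalIntegrable_const ?_
  · rw [hIoc]
    filter_upwards [(ae_restrict_iff' measurableSet_Ioc).1 (hC k)] with t ht hmem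
    rw [Real.norm_of_nonneg vexIntegrand_nonneg]
    exact vexIntegrand_le_abs_deriv.trans (ht hmem)
  · rw [hIoc]
    filter_upwards [(ae_restrict_iff' measurableSet_Ioc).1 hderiv, ae_deriv_eq_zero_of_eq f 1]
      with t hdt hlevel hmem
    exact tendsto_vexIntegrand (hunif.tendsto_at t) (hdt hmem) hlevel

theorem not_unifTauContC_of_tendsto_dTauC {V : (ℝ → ℝ) → ℝ} {fm gm : ℕ → ℝ → ℝ}
    {M ε : ℝ} (hM : 0 < M) (hε : 0 < ε)
    (hfg : ∀ m, LipC (fm m) ∧ LipC (gm m) ∧ NormBoundC M (fm m) ∧ NormBoundC M (gm m))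
    (hd : Tendsto (fun m => dTauC (fm m) (gm m)) atTop (𝓝 0))
    (hV : ∀ m, ε ≤ |V (fm m) - V (gm m)|) : ¬ UnifTauContC V := by
  intro hU
  obtain ⟨δ, hδ, hU⟩ := hU ε hε M hM
  obtain ⟨m, hm⟩ := (hd.eventually (eventually_lt_nhds hδ)).exists
  obtain ⟨hf, hg, hfM, hgM⟩ := hfg m
  exact (hV m).not_gt (hU _ _ hf hg hfM hgM hm)

theorem integral_abs_sin_natCast_mul {n : ℕ} (hn : n ≠ 0) :
    ∫ t in (0 : ℝ)..(2 * π), |sin (n * t)| = 4 := by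
  have hn' : (n : ℝ) ≠ 0 := Nat.cast_ne_zero.2 hn
  have hper : Periodic (fun x => |sin x|) π := fun x => by simp [sin_add_pi]
  have hpi : ∫ x in (0 : ℝ)..π, |sin x| = 2 := by
    rw [intervalIntegral.integral_congr fun x hx =>
      abs_of_nonneg (sin_nonneg_of_nonneg_of_le_pi (Set.uIcc_of_le pi_pos.le ▸ hx).1
        (Set.uIcc_of_le pi_pos.le ▸ hx).2), integral_sin]
    norm_num
  rw [intervalIntegral.integral_comp_mul_left (fun x => |sin x|) hn', mul_zero,
    show (n : ℝ) * (2 * π) = 0 + (2 * n : ℤ) • π by rw [zsmul_eq_mul]; push_cast; ring,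
    hper.intervalIntegral_add_zsmul_eq _ _ fun _ _ =>
      (continuous_sin.abs).intervalIntegrable _ _,
    zero_add, hpi, zsmul_eq_mul, smul_eq_mul]
  push_cast
  field_simp
  ring

/-- `m + 1` periods of a cosine wave of height `π / (m + 1)`: the heights shrink to `0` while the
total variation over `[0, 2π]` stays `2π`. -/
def wave (m : ℕ) (t : ℝ) : ℝ :=
  π / (2 * (m + 1)) * (1 - cos ((m + 1) * t))

section wave

variable (m : ℕ)

theorem hasDerivAt_wave (t : ℝ) : HasDerivAt (wave m) (π / 2 * sin ((m + 1) * t)) t := by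
  have hlin : HasDerivAt (fun t : ℝ => (m + 1) * t) (m + 1) t := by
    simpa using (hasDerivAt_id t).const_mul ((m : ℝ) + 1)
  refine ((hlin.cos.const_sub 1).const_mul (π / (2 * (m + 1)))).congr_deriv ?_
  field_simp

theorem deriv_const_add_wave (c t : ℝ) :
    deriv (fun s => c + wave m s) t = π / 2 * sin ((m + 1) * t) :=
  ((hasDerivAt_wave m t).const_add c).deriv

theorem wave_nonneg (t : ℝ) : 0 ≤ wave m t :=
  mul_nonneg (by positivity) (sub_nonneg.2 (cos_le_one _))

theorem wave_le (t : ℝ) : wave m t ≤ π / (m + 1) := by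
  have h := neg_one_le_cos ((m + 1) * t)
  have hpos : 0 ≤ π / (2 * (m + 1)) := by positivity
  calc wave m t ≤ π / (2 * (m + 1)) * 2 := by unfold wave; gcongr; linarith
    _ = π / (m + 1) := by field_simp

theorem wave_lt (t : ℝ) (h : cos ((m + 1) * t) ≠ -1) : wave m t < π / (m + 1) := by
  have h' := lt_of_le_of_ne (neg_one_le_cos ((m + 1) * t)) h.symm
  have hpos : 0 < π / (2 * (m + 1)) := by positivity
  calc wave m t < π / (2 * (m + 1)) * 2 := by unfold wave; gcongr; linarith
    _ = π / (m + 1) := by field_simp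

theorem countable_setOf_cos_mul_eq_neg_one :
    {t : ℝ | cos ((m + 1) * t) = -1}.Countable := by
  refine (Set.countable_range fun k : ℤ => (k * (2 * π) - π) / (m + 1)).mono fun t ht => ?_
  obtain ⟨k, hk⟩ := (cos_eq_one_iff _).1 (show cos ((m + 1) * t + π) = 1 by
    rw [cos_add_pi, ht, neg_neg])
  exact ⟨k, by field_simp; linarith⟩

variable (c : ℝ)

theorem lipschitzWith_const_add_wave :
    LipschitzWith (Real.toNNReal (π / 2)) (fun t => c + wave m t) := by
  refine lipschitzWith_of_nnnorm_deriv_le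
    (fun t => ((hasDerivAt_wave m t).const_add c).differentiableAt) fun t => ?_
  rw [← NNReal.coe_le_coe, coe_nnnorm, Real.coe_toNNReal _ (by positivity),
    deriv_const_add_wave, norm_mul, Real.norm_of_nonneg (by positivity)]
  exact mul_le_of_le_one_right (by positivity) (abs_sin_le_one _)

theorem lipC_const_add_wave : LipC (fun t => c + wave m t) := by
  refine ⟨fun t => ?_, _, lipschitzWith_const_add_wave m c⟩
  have : ((m : ℝ) + 1) * (t + 2 * π) = (m + 1) * t + ((m + 1 : ℕ) : ℤ) * (2 * π) := by
    push_cast; ring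
  simp only [wave, this, cos_add_int_mul_two_pi]

theorem normBoundC_const_add_wave {M : ℝ} (hlow : -M ≤ c) (hup : c + π / (m + 1) ≤ M)
    (hlip : π / 2 ≤ M) : NormBoundC M (fun t => c + wave m t) :=
  ⟨fun t => abs_le.2 ⟨by linarith [wave_nonneg m t], by linarith [wave_le m t]⟩,
    (lipschitzWith_const_add_wave m c).weaken (Real.toNNReal_le_toNNReal hlip)⟩

theorem Vex_const_add_wave_of_one_le (hc : 1 ≤ c) : Vex (fun t => c + wave m t) = 2 * π := by
  have hint : ∀ t, vexIntegrand (fun s => c + wave m s) t = π / 2 * |sin ((m + 1) * t)| := by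
    intro t
    rw [vexIntegrand_of_one_le (by linarith [wave_nonneg m t]), deriv_const_add_wave, abs_mul,
      abs_of_pos (by positivity)]
  rw [Vex_eq_integral_vexIntegrand, funext hint, intervalIntegral.integral_const_mul,
    show ((m : ℝ) + 1) = (m + 1 : ℕ) by push_cast; ring,
    integral_abs_sin_natCast_mul m.succ_ne_zero]
  ring

theorem Vex_const_add_wave_of_le (hc : c + π / (m + 1) ≤ 1) :
    Vex (fun t => c + wave m t) = 0 := by
  have hint : ∀ᵐ t, t ∈ Ι (0 : ℝ) (2 * π) →
      vexIntegrand (fun s => c + wave m s) t = 0 := by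
    filter_upwards [(countable_setOf_cos_mul_eq_neg_one m).ae_notMem volume] with t ht _
    exact vexIntegrand_of_lt_one (by linarith [wave_lt m t ht])
  rw [Vex_eq_integral_vexIntegrand, intervalIntegral.integral_congr_ae hint,
    intervalIntegral.integral_zero]

theorem dTauC_const_add_wave (d : ℝ) :
    dTauC (fun t => c + wave m t) (fun t => d + wave m t) = |c - d| := by
  have : Nonempty (Set.Icc (0 : ℝ) (2 * π)) := ⟨⟨0, le_rfl, by positivity⟩⟩
  simp [dTauC, deriv_const_add_wave]

end wave

theorem volume_Icc_zero_two_pi : (volume (Set.Icc (0 : ℝ) (2 * π))).toReal = 2 * π := by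
  rw [Real.volume_Icc, sub_zero, ENNReal.toReal_ofReal (by positivity)]

/-- `Vex` is a rotation-invariant τ-continuous valuation on `Lip(S¹)`,
but it is not uniformly τ-continuous: there are sequences `f_m, g_m` with uniformly
bounded Lipschitz norm and `d_τ(f_m, g_m) → 0`, while `Vex f_m = H¹([0,2π])` and
`Vex g_m = 0` for all `m`. -/
theorem Vex_tau_continuous_not_uniformly :
    IsValC Vex ∧ RotInvC Vex ∧ TauContC Vex ∧ ¬ UnifTauContC Vex ∧
    ∃ (fm gm : ℕ → ℝ → ℝ) (M : ℝ),
      (∀ m, LipC (fm m) ∧ LipC (gm m) ∧ NormBoundC M (fm m) ∧ NormBoundC M (gm m)) ∧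
      Tendsto (fun m => dTauC (fm m) (gm m)) atTop (𝓝 0) ∧
      (∀ m, Vex (fm m) = (volume (Set.Icc (0 : ℝ) (2 * Real.pi))).toReal ∧
        Vex (gm m) = 0) := by
  set fm : ℕ → ℝ → ℝ := fun m t => 1 + wave m t
  set gm : ℕ → ℝ → ℝ := fun m t => 1 - π / (m + 1) + wave m t
  have hpos (m : ℕ) : 0 < π / (m + 1) := by positivity
  have hsmall (m : ℕ) : π / (m + 1) ≤ π :=
    div_le_self pi_pos.le (by linarith [m.cast_nonneg (α := ℝ)])
  have hfg (m : ℕ) : LipC (fm m) ∧ LipC (gm m) ∧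
      NormBoundC (1 + π) (fm m) ∧ NormBoundC (1 + π) (gm m) :=
    ⟨lipC_const_add_wave m _, lipC_const_add_wave m _,
      normBoundC_const_add_wave m _ (by linarith [pi_pos]) (by linarith [hsmall m])
        (by linarith [pi_pos]),
      normBoundC_const_add_wave m _ (by linarith [hsmall m]) (by linarith [pi_pos])
        (by linarith [pi_pos])⟩
  have hd : Tendsto (fun m => dTauC (fm m) (gm m)) atTop (𝓝 0) := by
    simp only [fm, gm, dTauC_const_add_wave, sub_sub_cancel, abs_of_pos (hpos _)]
    simpa [div_eq_mul_inv] using tendsto_one_div_add_atTop_nhds_zero_nat.const_mul π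
  have hVf (m : ℕ) : Vex (fm m) = 2 * π := Vex_const_add_wave_of_one_le m 1 le_rfl
  have hVg (m : ℕ) : Vex (gm m) = 0 := Vex_const_add_wave_of_le m _ (by linarith)
  refine ⟨Vex_isVal, Vex_rotInv, Vex_tauCont, ?_, fm, gm, 1 + π, hfg, hd,
    fun m => ⟨by rw [hVf, volume_Icc_zero_two_pi], hVg m⟩⟩
  exact not_unifTauContC_of_tendsto_dTauC (by positivity) two_pi_pos hfg hd
    fun m => by rw [hVf, hVg, sub_zero, abs_of_pos two_pi_pos]
end
end
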